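/- For any biconed graph G^{A,B} there is a bijection between the set of birooted forests of G^{A,B}_red and the set of 2-edge-rooted forests of G^{A,B}_red. -/

import Mathlib

/-!
Formalization scaffold for "h-vectors of graphic matroids of biconed graphs".

A graph `G` (loops and parallel edges allowed) with vertex set `A ∪ B` is
modelled by an abstract finite edge type `E` with an endpoint map
`ends : E → Sym2 (Fin m ⊕ₗ Fin n)`, where `A = Fin m = {1,…,m}`,
`Ā = B \ A = Fin n = {1̄,…,n̄}` and the finset `S ⊆ Fin m` records `A ∩ B`
(so `B = S ∪ Ā`).  The biconing `G^{A,B}` adds the two vertices `0` and `0̄`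
and the edges `00̄`, `0a (a ∈ A)` and `0̄b (b ∈ B)`.
-/

namespace BiconedPaper

noncomputable section
open scoped Classical

/-! ### Walks in multigraphs presented by an endpoint map -/

/-- A walk in the multigraph with edge set `ε` and endpoint map `ends`. -/
inductive MWalk {ε ν : Type} (ends : ε → Sym2 ν) : ν → ν → Type
  | nil (u : ν) : MWalk ends u u
  | cons {u w : ν} (e : ε) (v : ν) (h : ends e = s(u, v)) (p : MWalk ends v w) :
      MWalk ends u w

namespace MWalk

variable {ε ν : Type} {ends : ε → Sym2 ν}

/-- The list of edges traversed by a walk. -/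
def edges : ∀ {u v : ν}, MWalk ends u v → List ε
  | _, _, nil _ => []
  | _, _, cons e _ _ p => e :: p.edges

/-- The list of vertices visited by a walk. -/
def support : ∀ {u v : ν}, MWalk ends u v → List ν
  | u, _, nil _ => [u]
  | u, _, cons _ _ _ p => u :: p.support

/-- A walk is a path if it visits no vertex twice. -/
def IsPath {u v : ν} (p : MWalk ends u v) : Prop := p.support.Nodup

/-- All edges of the walk belong to the edge set `F`. -/
def edgesIn {u v : ν} (p : MWalk ends u v) (F : Finset ε) : Prop :=
  ∀ e ∈ p.edges, e ∈ F

/-- The number of "bridging" edges traversed by a walk, i.e. steps whose two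
endpoints lie on different sides according to `sideF`. -/
def bridgeCount (sideF : ν → Bool) : ∀ {u v : ν}, MWalk ends u v → ℕ
  | _, _, nil _ => 0
  | u, _, cons _ v' _ p => (if sideF u = sideF v' then 0 else 1) + p.bridgeCount sideF

end MWalk

/-- `u` and `v` are joined by a walk all of whose edges lie in `F`. -/
def Reachable {ε ν : Type} (ends : ε → Sym2 ν) (F : Finset ε) (u v : ν) : Prop :=
  ∃ p : MWalk ends u v, p.edgesIn F

/-- An edge set is acyclic (a forest) iff removing any one of its edges
disconnects the endpoints of that edge.  (In particular no loops and no
parallel pairs.) -/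
def IsAcyclic {ε ν : Type} [DecidableEq ε] (ends : ε → Sym2 ν) (F : Finset ε) : Prop :=
  ∀ e ∈ F, ∀ u v : ν, ends e = s(u, v) → ¬ Reachable ends (F.erase e) u v

/-- A spanning tree: an acyclic edge set connecting every pair of vertices. -/
def IsSpanningTree {ε ν : Type} [DecidableEq ε] (ends : ε → Sym2 ν) (T : Finset ε) : Prop :=
  IsAcyclic ends T ∧ ∀ u v : ν, Reachable ends T u v

/-! ### Biconed graphs -/

/-- The data of a biconed graph `G^{A,B}`:  the graph `G` has vertex set
`A ∪ B` with `A = Fin m`, `Ā = B \ A = Fin n`, `A ∩ B = S`, and abstract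
edge set `E` (so loops and parallel edges are allowed). -/
structure BiconedGraph where
  m : ℕ
  n : ℕ
  E : Type
  fintypeE : Fintype E
  decEqE : DecidableEq E
  ends : E → Sym2 (Fin m ⊕ₗ Fin n)
  S : Finset (Fin m)

namespace BiconedGraph

variable (P : BiconedGraph)

instance : Fintype P.E := P.fintypeE
instance : DecidableEq P.E := P.decEqE

/-- The vertices of `G`, linearly ordered `1 < ⋯ < m < 1̄ < ⋯ < n̄`. -/
abbrev VG := Fin P.m ⊕ₗ Fin P.n

/-- The vertices of `G^{A,B}_red`:  `⊥` is the vertex `0̄`, ordered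
`0̄ < 1 < ⋯ < m < 1̄ < ⋯ < n̄`. -/
abbrev Vred := WithBot P.VG

/-- The vertices of `G^{A,B}`: `⊥` is `0`, ordered `0 < 0̄ < 1 < ⋯ < n̄`. -/
abbrev W := WithBot P.Vred

/-- The vertex `a ∈ A`. -/
def aVert (a : Fin P.m) : P.VG := toLex (Sum.inl a)
/-- The vertex `b ∈ Ā`. -/
def bVert (b : Fin P.n) : P.VG := toLex (Sum.inr b)
/-- Inclusion of the vertices of `G` into those of `G^{A,B}_red`. -/
def liftV (x : P.VG) : P.Vred := (x : WithBot P.VG)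
/-- Inclusion of the vertices of `G^{A,B}_red` into those of `G^{A,B}`. -/
def liftW (x : P.Vred) : P.W := (x : WithBot P.Vred)

/-- The edges of the biconed graph `G^{A,B}`:  the edge `00̄`, the coning
edges `0a (a ∈ A)`, `0̄b (b ∈ Ā)`, `0̄a (a ∈ A ∩ B)`, and the edges of `G`. -/
abbrev EB := Unit ⊕ (Fin P.m ⊕ (Fin P.n ⊕ ({a : Fin P.m // a ∈ P.S} ⊕ P.E)))

/-- The edge `00̄`. -/
abbrev e00 : P.EB := Sum.inl ()
/-- The coning edge `0a`, `a ∈ A`. -/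
abbrev eA (a : Fin P.m) : P.EB := Sum.inr (Sum.inl a)
/-- The coning edge `0̄b`, `b ∈ Ā`. -/
abbrev eB (b : Fin P.n) : P.EB := Sum.inr (Sum.inr (Sum.inl b))
/-- The coning edge `0̄a`, `a ∈ A ∩ B`. -/
abbrev eS (a : {a : Fin P.m // a ∈ P.S}) : P.EB := Sum.inr (Sum.inr (Sum.inr (Sum.inl a)))
/-- An original edge of `G`. -/
abbrev eG (e : P.E) : P.EB := Sum.inr (Sum.inr (Sum.inr (Sum.inr e)))

/-- The endpoint map of `G^{A,B}`. -/
def endsB : P.EB → Sym2 P.W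
  | Sum.inl _ => s((⊥ : P.W), P.liftW ⊥)
  | Sum.inr (Sum.inl a) => s((⊥ : P.W), P.liftW (P.liftV (P.aVert a)))
  | Sum.inr (Sum.inr (Sum.inl b)) => s(P.liftW ⊥, P.liftW (P.liftV (P.bVert b)))
  | Sum.inr (Sum.inr (Sum.inr (Sum.inl a))) => s(P.liftW ⊥, P.liftW (P.liftV (P.aVert a.1)))
  | Sum.inr (Sum.inr (Sum.inr (Sum.inr e))) => (P.ends e).map fun x => P.liftW (P.liftV x)

/-- The spanning tree `T₀`, consisting of `00̄`, the edges `0a (a ∈ A)` and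
the edges `0̄b (b ∈ Ā)`. -/
def T0 : Finset P.EB :=
  Finset.univ.filter fun e => match e with
    | Sum.inl _ => True
    | Sum.inr (Sum.inl _) => True
    | Sum.inr (Sum.inr (Sum.inl _)) => True
    | _ => False

/-- The edges of `G^{A,B}_red` (delete the edges of `T₀` and the vertex `0`):
the edges `0̄a (a ∈ A ∩ B)` together with the edges of `G`. -/
abbrev Ered := {a : Fin P.m // a ∈ P.S} ⊕ P.E

/-- The endpoint map of `G^{A,B}_red`; `⊥` is the vertex `0̄`. -/
def endsRed : P.Ered → Sym2 P.Vred
  | Sum.inl a => s((⊥ : P.Vred), P.liftV (P.aVert a.1))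
  | Sum.inr e => (P.ends e).map P.liftV

/-- Inclusion of the edges of `G^{A,B}_red` into those of `G^{A,B}`. -/
def redToEB : P.Ered → P.EB
  | Sum.inl a => P.eS a
  | Sum.inr e => P.eG e

/-- The edge set `T \ T₀` of `T`, viewed inside `G^{A,B}_red`. -/
def redOf (T : Finset P.EB) : Finset P.Ered :=
  Finset.univ.filter fun e => P.redToEB e ∈ T

/-- `true` on the vertices of `A`, `false` on the vertices of `Ā ∪ {0̄}`. -/
def side : P.Vred → Bool :=
  WithBot.recBotCoe false fun x => Sum.elim (fun _ => true) (fun _ => false) (ofLex x)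

/-- The vertex lies in `A`. -/
def InA (v : P.Vred) : Prop := ∃ a : Fin P.m, v = P.liftV (P.aVert a)

/-- An edge of `G^{A,B}_red` is bridging if it joins a vertex of `A` to a
vertex of `Ā ∪ {0̄}`. -/
def BridgingE (e : P.Ered) : Prop :=
  ∃ u v : P.Vred, P.endsRed e = s(u, v) ∧ P.side u ≠ P.side v

/-! ### 2-edge-rooted forests -/

/-- The underlying edge set `F` of the multiset of edges given by the
multiplicity function `mult` (an edge `e` carries `mult e - 1` edge roots). -/
def mSupport (mult : P.Ered → ℕ) : Finset P.Ered :=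
  Finset.univ.filter fun e => mult e ≠ 0

/-- The degree of the multiset of edges given by `mult`. -/
def deg (mult : P.Ered → ℕ) : ℕ := ∑ e : P.Ered, mult e

/-- Edge `e` meets the connected component of `v` in the edge set `F`. -/
def Touches (F : Finset P.Ered) (v : P.Vred) (e : P.Ered) : Prop :=
  ∃ u : P.Vred, u ∈ P.endsRed e ∧ Reachable P.endsRed F v u

/-- The total number of edge roots in the component of `v`. -/
def compEdgeRoots (mult : P.Ered → ℕ) (v : P.Vred) : ℕ :=
  ∑ e ∈ P.mSupport mult, if P.Touches (P.mSupport mult) v e then mult e - 1 else 0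

/-- The component of `v` is `compCount`-edge-rooted:  the number of its edge
roots, plus `1` if it contains the vertex `0̄`. -/
def compCount (mult : P.Ered → ℕ) (v : P.Vred) : ℕ :=
  P.compEdgeRoots mult v +
    if Reachable P.endsRed (P.mSupport mult) v (⊥ : P.Vred) then 1 else 0

/-- Condition (C3) for the `2`-edge-rooted component of `v`:  the unique
shortest path containing both edge roots (resp. the vertex `0̄` and the edge
root, if the component contains `0̄`) has an odd number of bridging edges.
The shortest path containing two edges is the unique path whose first and
last edges are the two rooted edges; if the two edge roots lie on one common
edge (`mult e = 3`) the path is that single edge. -/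
def C3At (mult : P.Ered → ℕ) (v : P.Vred) : Prop :=
  (Reachable P.endsRed (P.mSupport mult) v (⊥ : P.Vred) →
    ∃ (x : P.Vred) (p : MWalk P.endsRed (⊥ : P.Vred) x),
      p.IsPath ∧ p.edgesIn (P.mSupport mult) ∧
      (∃ e, p.edges.getLast? = some e ∧ 2 ≤ mult e) ∧
      Odd (p.bridgeCount P.side)) ∧
  (¬ Reachable P.endsRed (P.mSupport mult) v (⊥ : P.Vred) →
    ∃ (x y : P.Vred) (p : MWalk P.endsRed x y),
      p.IsPath ∧ p.edgesIn (P.mSupport mult) ∧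
      Reachable P.endsRed (P.mSupport mult) v x ∧
      (∃ e, p.edges.head? = some e ∧ 2 ≤ mult e) ∧
      (∃ e, p.edges.getLast? = some e ∧ 2 ≤ mult e) ∧
      (∀ e, p.edges = [e] → mult e = 3) ∧
      Odd (p.bridgeCount P.side))

/-- `mult : Ered → ℕ` is (the multiplicity function of) a 2-edge-rooted
forest of `G^{A,B}_red`:
(C0) its support is a spanning forest;
(C1) at most one component is `2`-edge-rooted;
(C2) every other component is `0`- or `1`-edge-rooted;
(C3) the parity condition on the path joining the two roots. -/
def Is2ERF (mult : P.Ered → ℕ) : Prop :=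
  IsAcyclic P.endsRed (P.mSupport mult) ∧
  (∀ v : P.Vred, P.compCount mult v ≤ 2) ∧
  (∀ u v : P.Vred, P.compCount mult u = 2 → P.compCount mult v = 2 →
    Reachable P.endsRed (P.mSupport mult) u v) ∧
  (∀ v : P.Vred, P.compCount mult v = 2 → P.C3At mult v)

/-! ### Birooted forests -/

/-- `(F, R)` is a birooted forest of `G^{A,B}_red`:  `F` is a spanning forest,
the root set `R` contains `0̄`, every component of `F` contains at least one
root, no component contains three roots, at most one component contains two
roots, and a component with two roots has one root in `A` and the other in
`Ā ∪ {0̄}`. -/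
def IsBirootedForest (F : Finset P.Ered) (R : Set P.Vred) : Prop :=
  IsAcyclic P.endsRed F ∧
  (⊥ : P.Vred) ∈ R ∧
  (∀ v : P.Vred, ∃ r ∈ R, Reachable P.endsRed F v r) ∧
  (∀ r₁ ∈ R, ∀ r₂ ∈ R, ∀ r₃ ∈ R, r₁ ≠ r₂ → r₁ ≠ r₃ → r₂ ≠ r₃ →
    Reachable P.endsRed F r₁ r₂ → Reachable P.endsRed F r₁ r₃ → False) ∧
  (∀ r₁ ∈ R, ∀ r₂ ∈ R, ∀ r₃ ∈ R, ∀ r₄ ∈ R, r₁ ≠ r₂ → r₃ ≠ r₄ →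
    Reachable P.endsRed F r₁ r₂ → Reachable P.endsRed F r₃ r₄ →
    Reachable P.endsRed F r₁ r₃) ∧
  (∀ r₁ ∈ R, ∀ r₂ ∈ R, r₁ ≠ r₂ → Reachable P.endsRed F r₁ r₂ →
    (P.InA r₁ ∧ ¬ P.InA r₂) ∨ (P.InA r₂ ∧ ¬ P.InA r₁))

/-! ### Internal activity and the edge order -/

/-- `e` is internally passive in the spanning tree `T`:  it can be exchanged
for a strictly smaller edge `f` so that the result is again a spanning tree. -/
def InternallyPassive (ord : LinearOrder P.EB) (T : Finset P.EB) (e : P.EB) : Prop :=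
  e ∈ T ∧ ∃ f : P.EB, ord.lt f e ∧ IsSpanningTree P.endsB (insert f (T.erase e))

/-- `e` is internally active in the spanning tree `T`. -/
def InternallyActive (ord : LinearOrder P.EB) (T : Finset P.EB) (e : P.EB) : Prop :=
  e ∈ T ∧ ¬ ∃ f : P.EB, ord.lt f e ∧ IsSpanningTree P.endsB (insert f (T.erase e))

/-- The number of internally passive edges of `T`. -/
def ipCount (ord : LinearOrder P.EB) (T : Finset P.EB) : ℕ :=
  (T.filter fun e => P.InternallyPassive ord T e).card

/-- The smaller endpoint of an edge of `G^{A,B}`. -/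
def endMin (e : P.EB) : P.W := Sym2.lift ⟨fun a b => a ⊓ b, fun a b => inf_comm a b⟩ (P.endsB e)
/-- The larger endpoint of an edge of `G^{A,B}`. -/
def endMax (e : P.EB) : P.W := Sym2.lift ⟨fun a b => a ⊔ b, fun a b => sup_comm a b⟩ (P.endsB e)

/-- The endpoints of an edge, as an ordered pair in the lexicographic square
of the vertex order `0 < 0̄ < 1 < ⋯ < m < 1̄ < ⋯ < n̄`. -/
def lexEnds (e : P.EB) : P.W ×ₗ P.W := toLex (P.endMin e, P.endMax e)

/-- A linear order on the edges of `G^{A,B}` is admissible if it refines the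
lexicographic order on endpoints (so parallel edges are ordered arbitrarily). -/
def AdmissibleOrder (ord : LinearOrder P.EB) : Prop :=
  ∀ e f : P.EB, P.lexEnds e < P.lexEnds f → ord.lt e f

/-- `v` is a connecting vertex of `T`:  `v ∈ A` and `v` is adjacent to `0` in
`T`, or `v ∈ Ā` and `v` is adjacent to `0̄` in `T`. -/
def ConnVertex (T : Finset P.EB) (v : P.Vred) : Prop :=
  (∃ a : Fin P.m, v = P.liftV (P.aVert a) ∧ P.eA a ∈ T) ∨
  (∃ b : Fin P.n, v = P.liftV (P.bVert b) ∧ P.eB b ∈ T)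

/-- `e` is a connecting edge of `T` (an edge `0a`, `a ∈ A`, or `0̄b`, `b ∈ Ā`)
with connecting vertex `v`. -/
def ConnEdge (T : Finset P.EB) (e : P.EB) (v : P.Vred) : Prop :=
  e ∈ T ∧ ((∃ a : Fin P.m, e = P.eA a ∧ v = P.liftV (P.aVert a)) ∨
           (∃ b : Fin P.n, e = P.eB b ∧ v = P.liftV (P.bVert b)))

/-! ### The h-vector -/

/-- `f_{i-1}`:  the number of acyclic edge sets of cardinality `i` in `G^{A,B}`. -/
def numAcyclic (i : ℕ) : ℕ :=
  Nat.card {F : Finset P.EB // IsAcyclic P.endsB F ∧ F.card = i}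

/-- The rank of the graphic matroid of `G^{A,B}`:  `|V| - 1 = m + n + 1`. -/
def d : ℕ := P.m + P.n + 1

/-- `h` is the h-vector of the graphic matroid of `G^{A,B}`:  it satisfies
`Σ_{i=0}^{d} f_{i-1} (t-1)^{d-i} = Σ_{k=0}^{d} h_k t^{d-k}`. -/
def IsHVector (h : ℕ → ℤ) : Prop :=
  ∑ i ∈ Finset.range (P.d + 1),
      Polynomial.C ((P.numAcyclic i : ℤ)) * (Polynomial.X - 1) ^ (P.d - i)
    = ∑ k ∈ Finset.range (P.d + 1), Polynomial.C (h k) * Polynomial.X ^ (P.d - k)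

end BiconedGraph

/-- `(h 0, …, h d)` is a pure O-sequence:  there is a multicomplex `M` of
multisets on a finite ground set (nonempty, closed under sub-multisets), all
of whose inclusion-maximal members have the same cardinality, whose members
all have cardinality at most `d`, and which has exactly `h i` members of
cardinality `i` for every `i ≤ d`. -/
def IsPureOSeq (d : ℕ) (h : ℕ → ℤ) : Prop :=
  ∃ (N : ℕ) (M : Set (Multiset (Fin N))),
    M.Nonempty ∧
    (∀ s ∈ M, ∀ t : Multiset (Fin N), t ≤ s → t ∈ M) ∧
    (∀ s ∈ M, ∀ t ∈ M, (∀ u ∈ M, s ≤ u → u = s) → (∀ u ∈ M, t ≤ u → u = t) →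
      Multiset.card s = Multiset.card t) ∧
    (∀ s ∈ M, Multiset.card s ≤ d) ∧
    (∀ i ≤ d, (Nat.card {s : Multiset (Fin N) // s ∈ M ∧ Multiset.card s = i} : ℤ) = h i)


/-!
Trade every vertex root `r ≠ 0̄` for an edge root on the first edge of the tree path from `r` to
its target: the other root of its component if there is one, otherwise the least vertex of the
component (a lone root sitting at the least vertex is dropped). The component of `0̄` stays 1- or
becomes 2-edge-rooted, a component with one root becomes 0- or 1-edge-rooted and one with two roots
2-edge-rooted; as those two roots lie on different sides of the partition `A | Ā ∪ {0̄}`, the path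
between the two edge roots (or between `0̄` and the edge root) has an odd number of bridging edges,
which is (C3).

Conversely an edge root on `e` gives back the endpoint of `e` on the far side from the marks of its
component (`0̄`, or an endpoint of the other rooted edge), or, if there are none, from the least
vertex; an edge carrying two edge roots gives back both endpoints, and a component without roots
gets its least vertex. A component carries at most two roots in all, so the marks of a rooted edge
lie on one side of it, and these choices recover exactly the vertex roots the edge roots came from.
-/

namespace MWalk

variable {ε ν : Type} {ends : ε → Sym2 ν}

def append : ∀ {u v w : ν}, MWalk ends u v → MWalk ends v w → MWalk ends u w
  | _, _, _, nil _, q => q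
  | _, _, _, cons e x h p, q => cons e x h (p.append q)

def reverse : ∀ {u v : ν}, MWalk ends u v → MWalk ends v u
  | _, _, nil u => nil u
  | u, _, cons e _ h p => p.reverse.append (cons e u (by rw [h, Sym2.eq_swap]) (nil u))

@[simp] lemma edges_nil {u : ν} : (nil (ends := ends) u).edges = [] := rfl

@[simp] lemma edges_cons {u v w : ν} (e : ε) (h : ends e = s(u, v)) (p : MWalk ends v w) :
    (cons e v h p).edges = e :: p.edges := rfl

@[simp] lemma support_nil {u : ν} : (nil (ends := ends) u).support = [u] := rfl

@[simp] lemma support_cons {u v w : ν} (e : ε) (h : ends e = s(u, v)) (p : MWalk ends v w) :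
    (cons e v h p).support = u :: p.support := rfl

@[simp] lemma edges_append : ∀ {u v w : ν} (p : MWalk ends u v) (q : MWalk ends v w),
    (p.append q).edges = p.edges ++ q.edges
  | _, _, _, nil _, _ => rfl
  | _, _, _, cons _ _ _ p, q => by simp [append, edges_append p q]

lemma support_append : ∀ {u v w : ν} (p : MWalk ends u v) (q : MWalk ends v w),
    (p.append q).support = p.support ++ q.support.tail
  | _, _, _, nil _, nil _ => rfl
  | _, _, _, nil _, cons _ _ _ _ => rfl
  | _, _, _, cons _ _ _ p, q => by simp [append, support_append p q]

lemma end_mem_support : ∀ {u v : ν} (p : MWalk ends u v), v ∈ p.support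
  | _, _, nil _ => by simp
  | _, _, cons _ _ _ p => by simp [end_mem_support p]

@[simp] lemma edges_reverse : ∀ {u v : ν} (p : MWalk ends u v),
    p.reverse.edges = p.edges.reverse
  | _, _, nil _ => rfl
  | _, _, cons _ _ _ p => by simp [reverse, edges_reverse p]

lemma support_reverse : ∀ {u v : ν} (p : MWalk ends u v),
    p.reverse.support = p.support.reverse
  | _, _, nil _ => rfl
  | _, _, cons _ _ _ p => by simp [reverse, support_append, support_reverse p]

lemma IsPath.reverse {u v : ν} {p : MWalk ends u v} (hp : p.IsPath) : p.reverse.IsPath := by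
  unfold IsPath at *
  rwa [support_reverse, List.nodup_reverse]

lemma mem_support_of_mem_edges : ∀ {u v : ν} (p : MWalk ends u v) {e : ε} {a b : ν},
    e ∈ p.edges → ends e = s(a, b) → a ∈ p.support
  | _, _, nil _, _, _, _ => by simp
  | _, _, cons f _ h p, e, a, b => by
      intro he hab
      rcases List.mem_cons.1 he with rfl | he
      · rw [h, Sym2.eq_iff] at hab
        rcases hab with ⟨rfl, rfl⟩ | ⟨rfl, rfl⟩
        · simp
        · cases p <;> simp
      · simp [mem_support_of_mem_edges p he hab]

lemma IsPath.edges_nodup : ∀ {u v : ν} {p : MWalk ends u v}, p.IsPath → p.edges.Nodup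
  | _, _, nil _, _ => by simp
  | _, _, cons _ _ h p, hp => by
      rw [IsPath, support_cons, List.nodup_cons] at hp
      exact List.nodup_cons.2 ⟨fun hf => hp.1 (mem_support_of_mem_edges p hf h),
        IsPath.edges_nodup (p := p) hp.2⟩

lemma IsPath.head?_edges_eq {u v : ν} {p : MWalk ends u v} (hp : p.IsPath) {e : ε} {y : ν}
    (he : e ∈ p.edges) (hey : ends e = s(u, y)) : p.edges.head? = some e := by
  cases p with
  | nil _ => simp at he
  | cons f x h p =>
    rcases List.mem_cons.1 he with rfl | he
    · rfl
    · rw [IsPath, support_cons, List.nodup_cons] at hp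
      exact absurd (mem_support_of_mem_edges p he hey) hp.1

lemma IsPath.ne_of_edges_ne_nil {u v : ν} {p : MWalk ends u v} (hp : p.IsPath)
    (hne : p.edges ≠ []) : u ≠ v := by
  cases p with
  | nil _ => exact absurd rfl hne
  | cons e x h p =>
    rintro rfl
    rw [IsPath, support_cons, List.nodup_cons] at hp
    exact hp.1 (end_mem_support p)

lemma exists_suffix : ∀ {x v : ν} (q : MWalk ends x v) {u : ν}, u ∈ q.support →
    ∃ r : MWalk ends u v, r.edges ⊆ q.edges ∧ r.support.Sublist q.support
  | _, _, nil _, _, hu => by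
      obtain rfl := List.mem_singleton.1 hu
      exact ⟨nil _, by simp, by simp⟩
  | x, _, cons e y h q, u, hu => by
      by_cases hux : u = x
      · subst hux
        exact ⟨cons e y h q, List.Subset.refl _, List.Sublist.refl _⟩
      · obtain ⟨r, hr1, hr2⟩ := exists_suffix q ((List.mem_cons.1 hu).resolve_left hux)
        exact ⟨r, List.Subset.trans hr1 (List.subset_cons_self _ _),
          hr2.trans (List.sublist_cons_self _ _)⟩

lemma exists_isPath : ∀ {u v : ν} (p : MWalk ends u v),
    ∃ q : MWalk ends u v, q.IsPath ∧ q.edges ⊆ p.edges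
  | _, _, nil u => ⟨nil u, by simp [IsPath], List.Subset.refl _⟩
  | u, _, cons f x h p => by
      obtain ⟨q, hq, hqe⟩ := exists_isPath p
      by_cases hu : u ∈ q.support
      · obtain ⟨r, hr1, hr2⟩ := exists_suffix q hu
        exact ⟨r, hq.sublist hr2,
          List.Subset.trans (List.Subset.trans hr1 hqe) (List.subset_cons_self _ _)⟩
      · refine ⟨cons f x h q, List.nodup_cons.2 ⟨hu, hq⟩, ?_⟩
        simpa using List.cons_subset_cons f hqe

lemma odd_bridgeCount_iff (side : ν → Bool) : ∀ {u v : ν} (p : MWalk ends u v),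
    Odd (p.bridgeCount side) ↔ side u ≠ side v
  | _, _, nil _ => by simp [bridgeCount]
  | u, w, cons _ x _ p => by
      rw [bridgeCount, Nat.odd_add', odd_bridgeCount_iff side p]
      cases side u <;> cases side x <;> cases side w <;> decide

end MWalk

lemma _root_.List.Nodup.eq_singleton_of_head?_of_getLast? {α : Type*} {l : List α} {a : α}
    (hl : l.Nodup) (hh : l.head? = some a) (ht : l.getLast? = some a) : l = [a] := by
  obtain _ | ⟨b, _ | ⟨c, l⟩⟩ := l
  · simp at hh
  · simpa using hh
  · obtain rfl : b = a := by simpa using hh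
    rw [List.getLast?_cons_cons] at ht
    exact absurd (List.mem_of_getLast? ht) (List.nodup_cons.1 hl).1

lemma _root_.Finset.eq_or_eq_of_card_le_two {α : Type*} [DecidableEq α] {s : Finset α}
    {a b c : α} (hs : s.card ≤ 2) (ha : a ∈ s) (hb : b ∈ s) (hc : c ∈ s) (hab : a ≠ b) :
    c = a ∨ c = b := by
  by_contra! hne
  have := Finset.card_le_card (s := {a, b, c}) (t := s) (by simp [Finset.insert_subset_iff, *])
  rw [Finset.card_insert_of_notMem (by simp [hab, hne.1.symm]),
    Finset.card_pair hne.2.symm] at this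
  omega

open MWalk

section Forest

variable {ε ν : Type} {ends : ε → Sym2 ν} {F : Finset ε}

namespace Reachable

lemma refl (F : Finset ε) (u : ν) : Reachable ends F u u :=
  ⟨nil u, by simp [edgesIn]⟩

lemma symm {u v : ν} (h : Reachable ends F u v) : Reachable ends F v u := by
  obtain ⟨p, hp⟩ := h
  exact ⟨p.reverse, fun e he => hp e (by simpa using he)⟩

lemma trans {u v w : ν} (h : Reachable ends F u v) (h' : Reachable ends F v w) :
    Reachable ends F u w := by
  obtain ⟨p, hp⟩ := h
  obtain ⟨q, hq⟩ := h'
  exact ⟨p.append q, fun e he => (List.mem_append.1 (by simpa using he)).elim (hp e) (hq e)⟩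

lemma mono {F' : Finset ε} (hFF : F ⊆ F') {u v : ν} (h : Reachable ends F u v) :
    Reachable ends F' u v := by
  obtain ⟨p, hp⟩ := h
  exact ⟨p, fun e he => hFF (hp e he)⟩

lemma of_edge {e : ε} {u v : ν} (he : e ∈ F) (h : ends e = s(u, v)) : Reachable ends F u v :=
  ⟨cons e v h (nil v), by simp [edgesIn, he]⟩

lemma of_mem_ends {e : ε} {u v : ν} (he : e ∈ F) (hu : u ∈ ends e) (hv : v ∈ ends e) :
    Reachable ends F u v := by
  induction h : ends e using Sym2.ind with
  | _ a b =>
    rw [h, Sym2.mem_iff] at hu hv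
    have hab := of_edge he h
    rcases hu with rfl | rfl <;> rcases hv with rfl | rfl
    exacts [refl _ _, hab, hab.symm, refl _ _]

lemma exists_isPath {u v : ν} (h : Reachable ends F u v) :
    ∃ p : MWalk ends u v, p.IsPath ∧ p.edgesIn F := by
  obtain ⟨p, hp⟩ := h
  obtain ⟨q, hq, hqp⟩ := p.exists_isPath
  exact ⟨q, hq, fun e he => hp e (hqp he)⟩

variable [DecidableEq ε]

lemma erase_or {e : ε} {a b w : ν} (hab : ends e = s(a, b)) (h : Reachable ends F w a) :
    Reachable ends (F.erase e) w a ∨ Reachable ends (F.erase e) w b := by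
  obtain ⟨p, hp⟩ := h
  induction p with
  | nil _ => exact Or.inl (refl _ _)
  | cons f x hf p ih =>
    by_cases hfe : f = e
    · subst hfe
      rw [hab, Sym2.eq_iff] at hf
      rcases hf with ⟨rfl, rfl⟩ | ⟨rfl, rfl⟩
      · exact Or.inl (refl _ _)
      · exact Or.inr (refl _ _)
    · have hf' := of_edge (Finset.mem_erase.2 ⟨hfe, hp f (by simp)⟩) hf
      exact (ih hab fun g hg => hp g (by simp [hg])).imp hf'.trans hf'.trans

end Reachable

variable [DecidableEq ε]

lemma IsAcyclic.not_reachable_both (hF : IsAcyclic ends F) {e : ε} (he : e ∈ F)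
    {a b w : ν} (hab : ends e = s(a, b)) (ha : Reachable ends (F.erase e) w a)
    (hb : Reachable ends (F.erase e) w b) : False :=
  hF e he a b hab (ha.symm.trans hb)

/-- For a forest `F` in which `t` is reachable from `r`, `e` is the first edge of the path from
`r` to `t`. -/
def IsEdgeToward (ends : ε → Sym2 ν) (F : Finset ε) (r t : ν) (e : ε) : Prop :=
  e ∈ F ∧ r ∈ ends e ∧ ¬ Reachable ends (F.erase e) r t

namespace IsEdgeToward

variable {r t : ν} {e : ε}

lemma ne (h : IsEdgeToward ends F r t e) : r ≠ t := by
  rintro rfl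
  exact h.2.2 (Reachable.refl _ _)

lemma mem_ends (h : IsEdgeToward ends F r t e) : r ∈ ends e := h.2.1

lemma reachable (h : IsEdgeToward ends F r t e) {w : ν} (hw : w ∈ ends e) :
    Reachable ends F r w :=
  Reachable.of_mem_ends h.1 h.mem_ends hw

lemma not_reachable (h : IsEdgeToward ends F r t e) {w : ν}
    (hw : Reachable ends (F.erase e) t w) : ¬ Reachable ends (F.erase e) r w :=
  fun hr => h.2.2 (hr.trans hw.symm)

lemma of_isPath {y : ν} (hF : IsAcyclic ends F) (hey : ends e = s(r, y)) (p : MWalk ends y t)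
    (hp : (cons e y hey p).IsPath) (hin : (cons e y hey p).edgesIn F) :
    IsEdgeToward ends F r t e := by
  have heF : e ∈ F := hin e (by simp)
  refine ⟨heF, by simp [hey], fun hrt => hF e heF r y hey (hrt.trans (.symm ⟨p, fun f hf => ?_⟩))⟩
  have hnd := hp.edges_nodup
  rw [edges_cons, List.nodup_cons] at hnd
  exact Finset.mem_erase.2 ⟨fun hfe => hnd.1 (hfe ▸ hf), hin f (by simp [hf])⟩

lemma of_ends (hF : IsAcyclic ends F) (he : e ∈ F) (hrt : ends e = s(r, t)) :
    IsEdgeToward ends F r t e :=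
  ⟨he, by simp [hrt], hF e he r t hrt⟩

end IsEdgeToward

variable {r t : ν}

lemma exists_head_isEdgeToward (hF : IsAcyclic ends F) (p : MWalk ends r t) (hp : p.IsPath)
    (hin : p.edgesIn F) (hrt : r ≠ t) :
    ∃ e, p.edges.head? = some e ∧ IsEdgeToward ends F r t e := by
  cases p with
  | nil _ => exact absurd rfl hrt
  | cons e y hey p => exact ⟨e, rfl, IsEdgeToward.of_isPath hF hey p hp hin⟩

lemma exists_getLast_isEdgeToward (hF : IsAcyclic ends F) (p : MWalk ends r t) (hp : p.IsPath)
    (hin : p.edgesIn F) (hrt : r ≠ t) :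
    ∃ e, p.edges.getLast? = some e ∧ IsEdgeToward ends F t r e := by
  obtain ⟨e, he, h⟩ := exists_head_isEdgeToward hF p.reverse hp.reverse
    (fun f hf => hin f (by simpa using hf)) hrt.symm
  exact ⟨e, by simpa [List.head?_reverse] using he, h⟩

lemma exists_isEdgeToward (hF : IsAcyclic ends F) (hrt : r ≠ t) (h : Reachable ends F r t) :
    ∃ e, IsEdgeToward ends F r t e := by
  obtain ⟨p, hp, hin⟩ := h.exists_isPath
  obtain ⟨e, -, he⟩ := exists_head_isEdgeToward hF p hp hin hrt
  exact ⟨e, he⟩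

lemma IsEdgeToward.unique (h : Reachable ends F r t) {e e' : ε}
    (he : IsEdgeToward ends F r t e) (he' : IsEdgeToward ends F r t e') : e = e' := by
  obtain ⟨p, hp, hin⟩ := h.exists_isPath
  have key : ∀ f, IsEdgeToward ends F r t f → p.edges.head? = some f := by
    rintro f ⟨-, hrf, hf⟩
    obtain ⟨y, hy⟩ := Sym2.mem_iff_exists.1 hrf
    refine hp.head?_edges_eq (by_contra fun hfp => hf ⟨p, fun g hg => ?_⟩) hy
    exact Finset.mem_erase.2 ⟨fun hgf => hfp (hgf ▸ hg), hin g hg⟩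
  exact Option.some_injective _ ((key e he).symm.trans (key e' he'))

lemma exists_isEdgeToward_of_mem (hF : IsAcyclic ends F) {e : ε} (he : e ∈ F) {a : ν}
    (ha : a ∈ ends e) (ht : Reachable ends F t a) : ∃ r, IsEdgeToward ends F r t e := by
  induction h : ends e using Sym2.ind with
  | _ x y =>
    have htx : Reachable ends F t x := ht.trans (Reachable.of_mem_ends he ha (by simp [h]))
    rcases htx.erase_or h with hx | hy
    · refine ⟨y, he, by simp [h], fun hc => ?_⟩
      exact hF.not_reachable_both he h hx hc.symm
    · exact ⟨x, he, by simp [h], fun hc => hF.not_reachable_both he h hc.symm hy⟩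

def edgeToward (ends : ε → Sym2 ν) (F : Finset ε) (r t : ν) : Option ε :=
  if h : Reachable ends F r t ∧ ∃ e, IsEdgeToward ends F r t e then some h.2.choose else none

lemma edgeToward_eq_some_iff {e : ε} :
    edgeToward ends F r t = some e ↔ Reachable ends F r t ∧ IsEdgeToward ends F r t e := by
  unfold edgeToward
  split_ifs with h
  · rw [Option.some_inj]
    exact ⟨fun he => he ▸ ⟨h.1, h.2.choose_spec⟩,
      fun he => IsEdgeToward.unique h.1 h.2.choose_spec he.2⟩
  · simpa using fun hr he => h ⟨hr, e, he⟩

lemma edgeToward_isSome_iff (hF : IsAcyclic ends F) :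
    (edgeToward ends F r t).isSome ↔ r ≠ t ∧ Reachable ends F r t := by
  rw [Option.isSome_iff_exists]
  simp only [edgeToward_eq_some_iff]
  refine ⟨fun ⟨e, hr, he⟩ => ⟨he.ne, hr⟩, fun ⟨hrt, hr⟩ => ?_⟩
  obtain ⟨e, he⟩ := exists_isEdgeToward hF hrt hr
  exact ⟨e, hr, he⟩

end Forest

section CompMin

variable {ε ν : Type} {ends : ε → Sym2 ν} {F : Finset ε} [Fintype ν] [LinearOrder ν]

def compMin (ends : ε → Sym2 ν) (F : Finset ε) (v : ν) : ν :=
  ({w | Reachable ends F v w} : Finset ν).min' ⟨v, by simp [Reachable.refl]⟩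

lemma reachable_compMin (v : ν) : Reachable ends F v (compMin ends F v) := by
  simpa [compMin] using
    Finset.min'_mem ({w | Reachable ends F v w} : Finset ν) ⟨v, by simp [Reachable.refl]⟩

lemma compMin_congr {v w : ν} (h : Reachable ends F v w) :
    compMin ends F v = compMin ends F w := by
  unfold compMin
  congr 1
  ext x
  simpa using ⟨h.symm.trans, h.trans⟩

end CompMin

section Roots

variable {ε ν : Type} {ends : ε → Sym2 ν} {F : Finset ε} {R : Set ν} {r r' : ν}

def mate (ends : ε → Sym2 ν) (F : Finset ε) (R : Set ν) (r : ν) : Option ν :=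
  if h : ∃ r', r' ∈ R ∧ r' ≠ r ∧ Reachable ends F r r' then some h.choose else none

lemma mate_spec (h : mate ends F R r = some r') :
    r' ∈ R ∧ r' ≠ r ∧ Reachable ends F r r' := by
  unfold mate at h
  split_ifs at h with hh
  exact Option.some_injective _ h ▸ hh.choose_spec

lemma mate_eq_none_iff :
    mate ends F R r = none ↔ ∀ r' ∈ R, Reachable ends F r r' → r' = r := by
  unfold mate
  split_ifs with hh
  · obtain ⟨r', hr', hne, hreach⟩ := hh
    simpa using ⟨r', hr', hreach, hne⟩
  · simpa using fun r' hr' hreach => by_contra fun hne => hh ⟨r', hr', hne, hreach⟩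

lemma mate_eq_some (hr' : r' ∈ R) (hne : r' ≠ r) (hreach : Reachable ends F r r')
    (huniq : ∀ y ∈ R, Reachable ends F r y → y ≠ r → y = r') : mate ends F R r = some r' := by
  cases hm : mate ends F R r with
  | none => exact absurd (mate_eq_none_iff.1 hm r' hr' hreach) hne
  | some m =>
    obtain ⟨hmR, hmne, hmreach⟩ := mate_spec hm
    rw [huniq m hmR hmreach hmne]

variable [Fintype ν] [LinearOrder ν]

def target (ends : ε → Sym2 ν) (F : Finset ε) (R : Set ν) (r : ν) : ν :=
  (mate ends F R r).getD (compMin ends F r)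

lemma reachable_target (F : Finset ε) (R : Set ν) (r : ν) :
    Reachable ends F r (target ends F R r) := by
  unfold target
  cases hm : mate ends F R r with
  | none => exact reachable_compMin r
  | some r' => exact (mate_spec hm).2.2

lemma target_eq_of_mate (h : mate ends F R r = some r') : target ends F R r = r' := by
  simp [target, h]

lemma target_eq_compMin (h : mate ends F R r = none) : target ends F R r = compMin ends F r := by
  simp [target, h]

end Roots

namespace BiconedGraph

variable (P : BiconedGraph)

lemma side_eq_true_iff (v : P.Vred) : P.side v = true ↔ P.InA v := by
  refine ⟨fun h => ?_, fun ⟨a, ha⟩ => ha ▸ rfl⟩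
  rcases v with _ | (a | b)
  · exact absurd h Bool.false_ne_true
  · exact ⟨a, rfl⟩
  · exact absurd h Bool.false_ne_true

lemma side_ne_iff (v w : P.Vred) :
    P.side v ≠ P.side w ↔ (P.InA v ∧ ¬ P.InA w) ∨ (P.InA w ∧ ¬ P.InA v) := by
  rw [← P.side_eq_true_iff, ← P.side_eq_true_iff]
  cases P.side v <;> cases P.side w <;> decide

variable {P}

@[simp] lemma mem_mSupport {mult : P.Ered → ℕ} {e : P.Ered} :
    e ∈ P.mSupport mult ↔ mult e ≠ 0 := by
  simp [mSupport]

section Touches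

variable {F : Finset P.Ered} {u v : P.Vred} {e : P.Ered}

lemma touches_of_mem {w : P.Vred} (hw : w ∈ P.endsRed e) (h : Reachable P.endsRed F v w) :
    P.Touches F v e :=
  ⟨w, hw, h⟩

lemma Touches.reachable (h : P.Touches F v e) (he : e ∈ F) {w : P.Vred} (hw : w ∈ P.endsRed e) :
    Reachable P.endsRed F v w := by
  obtain ⟨u, hu, hr⟩ := h
  exact hr.trans (Reachable.of_mem_ends he hu hw)

lemma touches_congr (h : Reachable P.endsRed F u v) : P.Touches F u e ↔ P.Touches F v e :=
  ⟨fun ⟨w, hw, hr⟩ => ⟨w, hw, h.symm.trans hr⟩, fun ⟨w, hw, hr⟩ => ⟨w, hw, h.trans hr⟩⟩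

end Touches

def rootedEdges (mult : P.Ered → ℕ) (v : P.Vred) : Finset P.Ered :=
  {e | 2 ≤ mult e ∧ P.Touches (P.mSupport mult) v e}

section RootedEdges

variable {mult : P.Ered → ℕ} {u v : P.Vred} {e : P.Ered}

lemma mem_rootedEdges :
    e ∈ P.rootedEdges mult v ↔ 2 ≤ mult e ∧ P.Touches (P.mSupport mult) v e := by
  simp [rootedEdges]

lemma mem_rootedEdges_of_mem {w : P.Vred} (he : 2 ≤ mult e) (hw : w ∈ P.endsRed e)
    (h : Reachable P.endsRed (P.mSupport mult) v w) : e ∈ P.rootedEdges mult v :=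
  mem_rootedEdges.2 ⟨he, touches_of_mem hw h⟩

lemma rootedEdges_congr (h : Reachable P.endsRed (P.mSupport mult) u v) :
    P.rootedEdges mult u = P.rootedEdges mult v := by
  ext e
  rw [mem_rootedEdges, mem_rootedEdges, touches_congr h]

lemma compEdgeRoots_eq_sum (mult : P.Ered → ℕ) (v : P.Vred) :
    P.compEdgeRoots mult v = ∑ e ∈ P.rootedEdges mult v, (mult e - 1) := by
  rw [compEdgeRoots, ← Finset.sum_filter]
  refine (Finset.sum_subset (fun e he => ?_) fun e he hne => ?_).symm
  · rw [mem_rootedEdges] at he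
    simp only [Finset.mem_filter, mem_mSupport]
    exact ⟨by omega, he.2⟩
  · simp only [Finset.mem_filter, mem_mSupport] at he
    rw [mem_rootedEdges] at hne
    have : ¬ 2 ≤ mult e := fun h => hne ⟨h, he.2⟩
    omega

lemma compCount_congr (h : Reachable P.endsRed (P.mSupport mult) u v) :
    P.compCount mult u = P.compCount mult v := by
  simp only [compCount, compEdgeRoots_eq_sum, rootedEdges_congr h]
  congr 1
  exact if_congr ⟨h.symm.trans, h.trans⟩ rfl rfl

lemma compCount_eq_of_not_reachable_bot (hb : ¬ Reachable P.endsRed (P.mSupport mult) v ⊥) :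
    P.compCount mult v = P.compEdgeRoots mult v := by
  simp [compCount, hb]

lemma sum_le_compCount {S : Finset P.Ered} (hS : S ⊆ P.rootedEdges mult v) :
    ∑ e ∈ S, (mult e - 1) + (if Reachable P.endsRed (P.mSupport mult) v ⊥ then 1 else 0) ≤
      P.compCount mult v := by
  rw [compCount, compEdgeRoots_eq_sum]
  gcongr

end RootedEdges

section Attached

variable (P)

def IsMark (mult : P.Ered → ℕ) (e : P.Ered) (t : P.Vred) : Prop :=
  t = ⊥ ∨ ∃ f, f ≠ e ∧ 2 ≤ mult f ∧ t ∈ P.endsRed f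

/-- `v` is the vertex root encoded by an edge root on `e`: the endpoint of `e` on the far side
from every mark and, when the component of `e` holds no mark and `e` carries a single edge root,
from the least vertex of the component. -/
def IsAttachedRoot (mult : P.Ered → ℕ) (v : P.Vred) (e : P.Ered) : Prop :=
  2 ≤ mult e ∧ v ∈ P.endsRed e ∧
  (∀ t, P.IsMark mult e t → ¬ Reachable P.endsRed ((P.mSupport mult).erase e) v t) ∧
  ((∃ t, P.IsMark mult e t ∧ Reachable P.endsRed (P.mSupport mult) v t) ∨ mult e = 3 ∨
    ¬ Reachable P.endsRed ((P.mSupport mult).erase e) v (compMin P.endsRed (P.mSupport mult) v))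

def rootsOfMult (mult : P.Ered → ℕ) : Set P.Vred :=
  {v | v = ⊥ ∨ (P.compCount mult v = 0 ∧ v = compMin P.endsRed (P.mSupport mult) v) ∨
    ∃ e, P.IsAttachedRoot mult v e}

variable {P} {mult : P.Ered → ℕ} {e : P.Ered} {v x : P.Vred}

namespace IsAttachedRoot

lemma ne_bot (h : P.IsAttachedRoot mult v e) : v ≠ ⊥ := by
  rintro rfl
  exact h.2.2.1 ⊥ (Or.inl rfl) (Reachable.refl _ _)

lemma mem_mSupport (h : P.IsAttachedRoot mult v e) : e ∈ P.mSupport mult :=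
  BiconedGraph.mem_mSupport.2 (by have := h.1; omega)

lemma mem_rootedEdges (h : P.IsAttachedRoot mult v e) {w : P.Vred}
    (hw : Reachable P.endsRed (P.mSupport mult) w v) : e ∈ P.rootedEdges mult w :=
  mem_rootedEdges_of_mem h.1 h.2.1 hw

lemma edge_unique (h : P.IsAttachedRoot mult v e) {e' : P.Ered}
    (h' : P.IsAttachedRoot mult v e') : e = e' :=
  by_contra fun hne => h.2.2.1 v (Or.inr ⟨e', Ne.symm hne, h'.1, h'.2.1⟩) (Reachable.refl _ _)

lemma mem_rootsOfMult (h : P.IsAttachedRoot mult v e) : v ∈ P.rootsOfMult mult :=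
  Or.inr (Or.inr ⟨e, h⟩)

lemma isEdgeToward (h : P.IsAttachedRoot mult v e) {t : P.Vred} (ht : P.IsMark mult e t) :
    IsEdgeToward P.endsRed (P.mSupport mult) v t e :=
  ⟨h.mem_mSupport, h.2.1, h.2.2.1 t ht⟩

lemma mult_eq_three {x' : P.Vred} (hx : P.IsAttachedRoot mult x e)
    (hx' : P.IsAttachedRoot mult x' e) (hne : x ≠ x') : mult e = 3 := by
  have hxx' : P.endsRed e = s(x, x') := (Sym2.mem_and_mem_iff hne).1 ⟨hx.2.1, hx'.2.1⟩
  have hreach : Reachable P.endsRed (P.mSupport mult) x x' := .of_edge hx.mem_mSupport hxx'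
  have sep : ∀ w, Reachable P.endsRed (P.mSupport mult) x w →
      ¬ Reachable P.endsRed ((P.mSupport mult).erase e) x w →
      ¬ Reachable P.endsRed ((P.mSupport mult).erase e) x' w → False := fun w hw hxw hx'w =>
    (hw.symm.erase_or hxx').elim (fun hc => hxw hc.symm) fun hc => hx'w hc.symm
  rcases hx.2.2.2 with ⟨t, ht, hxt⟩ | h3 | hmin
  · exact (sep t hxt (hx.2.2.1 t ht) (hx'.2.2.1 t ht)).elim
  · exact h3
  rcases hx'.2.2.2 with ⟨t, ht, hxt⟩ | h3 | hmin'
  · exact (sep t (hreach.trans hxt) (hx.2.2.1 t ht) (hx'.2.2.1 t ht)).elim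
  · exact h3
  · rw [← compMin_congr hreach] at hmin'
    exact (sep _ (reachable_compMin x) hmin hmin').elim

end IsAttachedRoot

namespace Is2ERF

lemma mult_le_three (h : P.Is2ERF mult) {a : P.Vred} (ha : a ∈ P.endsRed e) : mult e ≤ 3 := by
  by_contra hlt
  have hS := sum_le_compCount (Finset.singleton_subset_iff.2
    (mem_rootedEdges_of_mem (by omega) ha (Reachable.refl (P.mSupport mult) a)))
  have := h.2.1 a
  simp only [Finset.sum_singleton] at hS
  omega

lemma reachable_erase_of_isMark (h : P.Is2ERF mult) (he : 2 ≤ mult e) {a t t' : P.Vred}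
    (ha : a ∈ P.endsRed e) (ht : P.IsMark mult e t) (ht' : P.IsMark mult e t')
    (hat : Reachable P.endsRed (P.mSupport mult) a t)
    (hat' : Reachable P.endsRed (P.mSupport mult) a t') :
    Reachable P.endsRed ((P.mSupport mult).erase e) t t' := by
  have hea := mem_rootedEdges_of_mem he ha (Reachable.refl (P.mSupport mult) a)
  have h2 := h.2.1 a
  -- beside `e`, `compCount ≤ 2` leaves room for only one of `0̄` and a second rooted edge
  rcases ht with rfl | ⟨f, hfe, hf, htf⟩ <;> rcases ht' with rfl | ⟨g, hge, hg, htg⟩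
  · exact Reachable.refl _ _
  · have hS := sum_le_compCount (mult := mult) (v := a) (S := {e, g}) (by
      simp [Finset.insert_subset_iff, hea, mem_rootedEdges_of_mem hg htg hat'])
    simp only [Finset.sum_pair (Ne.symm hge), if_pos hat] at hS
    omega
  · have hS := sum_le_compCount (mult := mult) (v := a) (S := {e, f}) (by
      simp [Finset.insert_subset_iff, hea, mem_rootedEdges_of_mem hf htf hat])
    simp only [Finset.sum_pair (Ne.symm hfe), if_pos hat'] at hS
    omega
  · obtain rfl | hfg := eq_or_ne f g
    · exact Reachable.of_mem_ends (Finset.mem_erase.2 ⟨hfe, mem_mSupport.2 (by omega)⟩) htf htg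
    · have hS := sum_le_compCount (mult := mult) (v := a) (S := {e, f, g}) (by
        simp [Finset.insert_subset_iff, hea, mem_rootedEdges_of_mem hf htf hat,
          mem_rootedEdges_of_mem hg htg hat'])
      rw [Finset.sum_insert (by simp [Ne.symm hfe, Ne.symm hge]), Finset.sum_pair hfg] at hS
      omega

lemma not_reachable_isMark_of_mult_eq_three (h : P.Is2ERF mult) (he : mult e = 3) {a t : P.Vred}
    (ha : a ∈ P.endsRed e) (ht : P.IsMark mult e t) :
    ¬ Reachable P.endsRed (P.mSupport mult) a t := by
  intro hat
  have hea := mem_rootedEdges_of_mem (by omega) ha (Reachable.refl (P.mSupport mult) a)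
  have h2 := h.2.1 a
  rcases ht with rfl | ⟨f, hfe, hf, htf⟩
  · have hS := sum_le_compCount (Finset.singleton_subset_iff.2 hea)
    simp only [Finset.sum_singleton, if_pos hat] at hS
    omega
  · have hS := sum_le_compCount (mult := mult) (v := a) (S := {e, f}) (by
      simp [Finset.insert_subset_iff, hea, mem_rootedEdges_of_mem hf htf hat])
    simp only [Finset.sum_pair (Ne.symm hfe)] at hS
    omega

lemma isAttachedRoot_of_isEdgeToward (h : P.Is2ERF mult) (he : 2 ≤ mult e) {t : P.Vred}
    (hx : IsEdgeToward P.endsRed (P.mSupport mult) x t e) (ht : P.IsMark mult e t)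
    (hxt : Reachable P.endsRed (P.mSupport mult) x t) : P.IsAttachedRoot mult x e := by
  refine ⟨he, hx.mem_ends, fun t' ht' hxt' => ?_, Or.inl ⟨t, ht, hxt⟩⟩
  exact hx.not_reachable (h.reachable_erase_of_isMark he hx.mem_ends ht ht' hxt
    (hxt'.mono (Finset.erase_subset _ _))) hxt'

lemma isAttachedRoot_of_mult_eq_three (h : P.Is2ERF mult) (he : mult e = 3) (hx : x ∈ P.endsRed e) :
    P.IsAttachedRoot mult x e :=
  ⟨by omega, hx, fun _ ht hxt => h.not_reachable_isMark_of_mult_eq_three he hx ht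
    (hxt.mono (Finset.erase_subset _ _)), Or.inr (Or.inl he)⟩

lemma exists_isAttachedRoot (h : P.Is2ERF mult) (he : 2 ≤ mult e) :
    ∃ x, P.IsAttachedRoot mult x e := by
  have hF := h.1
  have heF : e ∈ P.mSupport mult := mem_mSupport.2 (by omega)
  obtain ⟨a, ha⟩ : ∃ a, a ∈ P.endsRed e := ⟨_, (P.endsRed e).out_fst_mem⟩
  have hxa : ∀ {x}, x ∈ P.endsRed e → Reachable P.endsRed (P.mSupport mult) x a :=
    fun hx => Reachable.of_mem_ends heF hx ha
  by_cases hmark : ∃ t, P.IsMark mult e t ∧ Reachable P.endsRed (P.mSupport mult) a t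
  · obtain ⟨t, ht, hat⟩ := hmark
    obtain ⟨x, hx⟩ := exists_isEdgeToward_of_mem hF heF ha hat.symm
    exact ⟨x, h.isAttachedRoot_of_isEdgeToward he hx ht ((hxa hx.mem_ends).trans hat)⟩
  obtain he3 | he2 : mult e = 3 ∨ mult e = 2 := by have := h.mult_le_three ha; omega
  · exact ⟨a, h.isAttachedRoot_of_mult_eq_three he3 ha⟩
  obtain ⟨x, hx⟩ := exists_isEdgeToward_of_mem hF heF ha (reachable_compMin a).symm
  refine ⟨x, he, hx.mem_ends, fun t ht hxt => hmark ⟨t, ht, ?_⟩, Or.inr (Or.inr ?_)⟩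
  · exact (hxa hx.mem_ends).symm.trans (hxt.mono (Finset.erase_subset _ _))
  · rw [compMin_congr (hxa hx.mem_ends)]
    exact hx.2.2

lemma card_isAttachedRoot (h : P.Is2ERF mult) (he : e ∈ P.mSupport mult) :
    ({x | P.IsAttachedRoot mult x e} : Finset P.Vred).card = mult e - 1 := by
  obtain ⟨a, ha⟩ : ∃ a, a ∈ P.endsRed e := ⟨_, (P.endsRed e).out_fst_mem⟩
  have he0 := mem_mSupport.1 he
  obtain he1 | he2 | he3 : mult e = 1 ∨ mult e = 2 ∨ mult e = 3 := by
    have := h.mult_le_three ha; omega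
  · rw [he1, Finset.card_eq_zero, Finset.filter_eq_empty_iff]
    exact fun x _ hx => by have := hx.1; omega
  · obtain ⟨x, hx⟩ := h.exists_isAttachedRoot (e := e) (by omega)
    rw [he2, Finset.card_eq_one]
    refine ⟨x, Finset.eq_singleton_iff_unique_mem.2 ⟨by simpa using hx, fun y hy => ?_⟩⟩
    by_contra hyx
    have := IsAttachedRoot.mult_eq_three (by simpa using hy) hx hyx
    omega
  · obtain ⟨b, hab⟩ := Sym2.mem_iff_exists.1 ha
    have hne : a ≠ b := fun hc => h.1 e he a b hab (hc ▸ Reachable.refl _ _)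
    rw [he3, Finset.card_eq_two]
    refine ⟨a, b, hne, Finset.ext fun x => ?_⟩
    simp only [Finset.mem_filter, Finset.mem_univ, true_and, Finset.mem_insert,
      Finset.mem_singleton]
    refine ⟨fun hx => by simpa [hab] using hx.2.1, fun hx => ?_⟩
    exact h.isAttachedRoot_of_mult_eq_three he3 (by rcases hx with rfl | rfl <;> simp [hab])

end Is2ERF

end Attached

section BackwardRoots

variable {mult : P.Ered → ℕ} {v : P.Vred}

namespace Is2ERF

lemma card_isAttachedRoot_reachable (h : P.Is2ERF mult) (v : P.Vred) :
    ({x | (∃ e, P.IsAttachedRoot mult x e) ∧ Reachable P.endsRed (P.mSupport mult) v x} :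
      Finset P.Vred).card = P.compEdgeRoots mult v := by
  have hbiUnion : ({x | (∃ e, P.IsAttachedRoot mult x e) ∧
      Reachable P.endsRed (P.mSupport mult) v x} : Finset P.Vred) =
      (P.rootedEdges mult v).biUnion fun e => {x | P.IsAttachedRoot mult x e} := by
    ext x
    simp only [Finset.mem_filter, Finset.mem_univ, true_and, Finset.mem_biUnion]
    constructor
    · rintro ⟨⟨e, hx⟩, hvx⟩
      exact ⟨e, hx.mem_rootedEdges hvx, hx⟩
    · rintro ⟨e, he, hx⟩
      exact ⟨⟨e, hx⟩, (mem_rootedEdges.1 he).2.reachable hx.mem_mSupport hx.2.1⟩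
  rw [hbiUnion, Finset.card_biUnion, compEdgeRoots_eq_sum]
  · refine Finset.sum_congr rfl fun e he => h.card_isAttachedRoot (mem_mSupport.2 ?_)
    have := (mem_rootedEdges.1 he).1
    omega
  · intro e _ f _ hef
    simp only [Function.onFun, Finset.disjoint_left, Finset.mem_filter, Finset.mem_univ,
      true_and]
    exact fun x hx hx' => hef (hx.edge_unique hx')

lemma card_rootsOfMult_reachable_le (h : P.Is2ERF mult) (v : P.Vred) :
    ({y | y ∈ P.rootsOfMult mult ∧ Reachable P.endsRed (P.mSupport mult) v y} :
      Finset P.Vred).card ≤ max (P.compCount mult v) 1 := by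
  have hsub : ({y | y ∈ P.rootsOfMult mult ∧ Reachable P.endsRed (P.mSupport mult) v y} :
      Finset P.Vred) ⊆
      ({⊥} : Finset P.Vred).filter (Reachable P.endsRed (P.mSupport mult) v) ∪
      ({compMin P.endsRed (P.mSupport mult) v} : Finset P.Vred).filter
        (fun _ => P.compCount mult v = 0) ∪
      ({x | (∃ e, P.IsAttachedRoot mult x e) ∧ Reachable P.endsRed (P.mSupport mult) v x} :
        Finset P.Vred) := by
    intro y
    simp only [Finset.mem_filter, Finset.mem_univ, true_and, Finset.mem_union,
      Finset.mem_singleton]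
    rintro ⟨rfl | ⟨h0, hmin⟩ | hy, hvy⟩
    · exact Or.inl (Or.inl ⟨rfl, hvy⟩)
    · rw [compCount_congr hvy, compMin_congr hvy]
      exact Or.inl (Or.inr ⟨hmin, h0⟩)
    · exact Or.inr ⟨hy, hvy⟩
  refine (Finset.card_le_card hsub).trans ((Finset.card_union_le _ _).trans ?_)
  grw [Finset.card_union_le, h.card_isAttachedRoot_reachable, Finset.filter_singleton,
    Finset.filter_singleton]
  unfold compCount
  split_ifs <;> simp_all
  omega

lemma card_rootsOfMult_reachable_le_two (h : P.Is2ERF mult) (v : P.Vred) :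
    ({y | y ∈ P.rootsOfMult mult ∧ Reachable P.endsRed (P.mSupport mult) v y} :
      Finset P.Vred).card ≤ 2 :=
  (h.card_rootsOfMult_reachable_le v).trans (max_le (h.2.1 v) one_le_two)

lemma compCount_eq_two (h : P.Is2ERF mult) {r₁ r₂ : P.Vred} (h₁ : r₁ ∈ P.rootsOfMult mult)
    (h₂ : r₂ ∈ P.rootsOfMult mult) (hne : r₁ ≠ r₂)
    (hv₁ : Reachable P.endsRed (P.mSupport mult) v r₁)
    (hv₂ : Reachable P.endsRed (P.mSupport mult) v r₂) : P.compCount mult v = 2 := by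
  have hpair := (Finset.card_le_card (s := {r₁, r₂}) (by simp [Finset.insert_subset_iff, *])).trans
    (h.card_rootsOfMult_reachable_le v)
  rw [Finset.card_pair hne] at hpair
  have := h.2.1 v
  omega

lemma exists_mem_rootsOfMult_reachable (h : P.Is2ERF mult) (v : P.Vred) :
    ∃ r ∈ P.rootsOfMult mult, Reachable P.endsRed (P.mSupport mult) v r := by
  by_cases hb : Reachable P.endsRed (P.mSupport mult) v ⊥
  · exact ⟨⊥, Or.inl rfl, hb⟩
  by_cases h0 : P.compEdgeRoots mult v = 0
  · have hm := reachable_compMin (ends := P.endsRed) (F := P.mSupport mult) v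
    refine ⟨_, Or.inr (Or.inl ⟨?_, compMin_congr hm⟩), hm⟩
    rw [← compCount_congr hm, compCount_eq_of_not_reachable_bot hb, h0]
  · rw [← h.card_isAttachedRoot_reachable] at h0
    obtain ⟨x, hx⟩ := Finset.card_pos.1 (Nat.pos_of_ne_zero h0)
    simp only [Finset.mem_filter, Finset.mem_univ, true_and] at hx
    exact ⟨x, hx.1.elim fun e hx => hx.mem_rootsOfMult, hx.2⟩

lemma exists_side_ne_of_compCount_eq_two (h : P.Is2ERF mult) (hv : P.compCount mult v = 2) :
    ∃ a ∈ P.rootsOfMult mult, ∃ b ∈ P.rootsOfMult mult,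
      Reachable P.endsRed (P.mSupport mult) v a ∧ Reachable P.endsRed (P.mSupport mult) v b ∧
      P.side a ≠ P.side b := by
  have hF := h.1
  by_cases hb : Reachable P.endsRed (P.mSupport mult) v ⊥
  · obtain ⟨x, p, hp, hin, ⟨e, hlast, he⟩, hodd⟩ := (h.2.2.2 v hv).1 hb
    have hne : p.edges ≠ [] := by rintro hc; simp [hc] at hlast
    obtain ⟨e', hlast', hx⟩ := exists_getLast_isEdgeToward hF p hp hin (hp.ne_of_edges_ne_nil hne)
    obtain rfl : e' = e := Option.some_injective _ (hlast'.symm.trans hlast)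
    have hxb : Reachable P.endsRed (P.mSupport mult) x ⊥ := Reachable.symm ⟨p, hin⟩
    exact ⟨⊥, Or.inl rfl, x,
      (h.isAttachedRoot_of_isEdgeToward he hx (Or.inl rfl) hxb).mem_rootsOfMult,
      hb, hb.trans hxb.symm, (odd_bridgeCount_iff _ p).1 hodd⟩
  · obtain ⟨x, y, p, hp, hin, hvx, ⟨e₁, hh, he₁⟩, ⟨e₂, hl, he₂⟩, hsingle, hodd⟩ :=
      (h.2.2.2 v hv).2 hb
    have hne : p.edges ≠ [] := by rintro hc; simp [hc] at hh
    have hxy := hp.ne_of_edges_ne_nil hne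
    obtain ⟨e₁', hh', hx⟩ := exists_head_isEdgeToward hF p hp hin hxy
    obtain ⟨e₂', hl', hy⟩ := exists_getLast_isEdgeToward hF p hp hin hxy
    obtain rfl := Option.some_injective _ (hh'.symm.trans hh)
    obtain rfl := Option.some_injective _ (hl'.symm.trans hl)
    have hxy' : Reachable P.endsRed (P.mSupport mult) x y := ⟨p, hin⟩
    have hroots : P.IsAttachedRoot mult x e₁' ∧ P.IsAttachedRoot mult y e₂' := by
      obtain rfl | h₁₂ := eq_or_ne e₁' e₂'
      · have h3 := hsingle e₁' (hp.edges_nodup.eq_singleton_of_head?_of_getLast? hh hl)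
        exact ⟨h.isAttachedRoot_of_mult_eq_three h3 hx.mem_ends,
          h.isAttachedRoot_of_mult_eq_three h3 hy.mem_ends⟩
      · exact ⟨h.isAttachedRoot_of_isEdgeToward he₁ hx
            (Or.inr ⟨e₂', h₁₂.symm, he₂, hy.mem_ends⟩) hxy',
          h.isAttachedRoot_of_isEdgeToward he₂ hy
            (Or.inr ⟨e₁', h₁₂, he₁, hx.mem_ends⟩) hxy'.symm⟩
    exact ⟨x, hroots.1.mem_rootsOfMult, y, hroots.2.mem_rootsOfMult, hvx, hvx.trans hxy',
      (odd_bridgeCount_iff _ p).1 hodd⟩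

theorem isBirootedForest_rootsOfMult (h : P.Is2ERF mult) :
    P.IsBirootedForest (P.mSupport mult) (P.rootsOfMult mult) := by
  have mem : ∀ {v r}, r ∈ P.rootsOfMult mult → Reachable P.endsRed (P.mSupport mult) v r →
      r ∈ ({y | y ∈ P.rootsOfMult mult ∧ Reachable P.endsRed (P.mSupport mult) v y} :
        Finset P.Vred) := fun hr hvr => by simpa using ⟨hr, hvr⟩
  refine ⟨h.1, Or.inl rfl, h.exists_mem_rootsOfMult_reachable, ?_, ?_, ?_⟩
  · intro r₁ h₁ r₂ h₂ r₃ h₃ h₁₂ h₁₃ h₂₃ hr₁₂ hr₁₃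
    obtain h | h := Finset.eq_or_eq_of_card_le_two (h.card_rootsOfMult_reachable_le_two r₁)
      (mem h₁ (.refl _ _)) (mem h₂ hr₁₂) (mem h₃ hr₁₃) h₁₂
    exacts [h₁₃ h.symm, h₂₃ h.symm]
  · intro r₁ h₁ r₂ h₂ r₃ h₃ r₄ h₄ h₁₂ h₃₄ hr₁₂ hr₃₄
    exact h.2.2.1 r₁ r₃ (h.compCount_eq_two h₁ h₂ h₁₂ (.refl _ _) hr₁₂)
      (h.compCount_eq_two h₃ h₄ h₃₄ (.refl _ _) hr₃₄)
  · intro r₁ h₁ r₂ h₂ h₁₂ hr₁₂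
    obtain ⟨a, ha, b, hb, hra, hrb, hab⟩ :=
      h.exists_side_ne_of_compCount_eq_two (h.compCount_eq_two h₁ h₂ h₁₂ (.refl _ _) hr₁₂)
    have hcard := h.card_rootsOfMult_reachable_le_two r₁
    have hab' : a ≠ b := fun hc => hab (hc ▸ rfl)
    rw [← P.side_ne_iff]
    rcases Finset.eq_or_eq_of_card_le_two hcard (mem ha hra) (mem hb hrb) (mem h₁ (.refl _ _))
      hab' with rfl | rfl <;>
    rcases Finset.eq_or_eq_of_card_le_two hcard (mem ha hra) (mem hb hrb) (mem h₂ hr₁₂)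
      hab' with rfl | rfl
    exacts [absurd rfl h₁₂, hab, hab.symm, absurd rfl h₁₂]

end Is2ERF

end BackwardRoots

section Forward

variable (P)

def rootEdge (F : Finset P.Ered) (R : Set P.Vred) (r : P.Vred) : Option P.Ered :=
  if r ∈ R ∧ r ≠ ⊥ then edgeToward P.endsRed F r (target P.endsRed F R r) else none

def multOfRoots (F : Finset P.Ered) (R : Set P.Vred) (e : P.Ered) : ℕ :=
  if e ∈ F then 1 + ({r | P.rootEdge F R r = some e} : Finset P.Vred).card else 0

variable {P} {F : Finset P.Ered} {R : Set P.Vred} {r v : P.Vred} {e : P.Ered}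

lemma rootEdge_eq_some_iff :
    P.rootEdge F R r = some e ↔
      r ∈ R ∧ r ≠ ⊥ ∧ IsEdgeToward P.endsRed F r (target P.endsRed F R r) e := by
  unfold rootEdge
  split_ifs with h
  · simp [edgeToward_eq_some_iff, reachable_target, h]
  · simpa using fun hr hrb _ => h ⟨hr, hrb⟩

lemma rootEdge_isSome_iff (hF : IsAcyclic P.endsRed F) :
    (P.rootEdge F R r).isSome ↔ r ∈ R ∧ r ≠ ⊥ ∧ r ≠ target P.endsRed F R r := by
  unfold rootEdge
  split_ifs with h
  · simp [edgeToward_isSome_iff hF, reachable_target, h]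
  · simp only [Option.isSome_none, Bool.false_eq_true, false_iff]
    exact fun ⟨hr, hrb, _⟩ => h ⟨hr, hrb⟩

lemma mSupport_multOfRoots (F : Finset P.Ered) (R : Set P.Vred) :
    P.mSupport (P.multOfRoots F R) = F := by
  ext e
  by_cases he : e ∈ F <;> simp [multOfRoots, he]

lemma multOfRoots_of_mem (he : e ∈ F) :
    P.multOfRoots F R e = 1 + ({r | P.rootEdge F R r = some e} : Finset P.Vred).card := by
  simp [multOfRoots, he]

lemma two_le_multOfRoots (h : P.rootEdge F R r = some e) : 2 ≤ P.multOfRoots F R e := by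
  rw [multOfRoots_of_mem (rootEdge_eq_some_iff.1 h).2.2.1]
  have : 0 < ({r | P.rootEdge F R r = some e} : Finset P.Vred).card :=
    Finset.card_pos.2 ⟨r, by simpa using h⟩
  omega

lemma exists_rootEdge_eq_some (he : 2 ≤ P.multOfRoots F R e) : ∃ r, P.rootEdge F R r = some e := by
  unfold multOfRoots at he
  split_ifs at he
  · obtain ⟨r, hr⟩ := Finset.card_pos.1 (by omega : 0 < ({r | P.rootEdge F R r = some e} :
      Finset P.Vred).card)
    exact ⟨r, by simpa using hr⟩
  · omega

lemma multOfRoots_eq_three {r' : P.Vred} (h : P.rootEdge F R r = some e)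
    (h' : P.rootEdge F R r' = some e) (hne : r ≠ r')
    (hall : ∀ s, P.rootEdge F R s = some e → s = r ∨ s = r') : P.multOfRoots F R e = 3 := by
  rw [multOfRoots_of_mem (rootEdge_eq_some_iff.1 h).2.2.1, Finset.card_eq_two.2 ⟨r, r', hne, ?_⟩]
  ext s
  simp only [Finset.mem_filter, Finset.mem_univ, true_and, Finset.mem_insert,
    Finset.mem_singleton]
  exact ⟨hall s, by rintro (rfl | rfl) <;> assumption⟩

lemma compCount_multOfRoots (v : P.Vred) :
    P.compCount (P.multOfRoots F R) v =
      ({r | (P.rootEdge F R r).isSome ∧ Reachable P.endsRed F v r} : Finset P.Vred).card +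
        if Reachable P.endsRed F v ⊥ then 1 else 0 := by
  rw [compCount, compEdgeRoots_eq_sum, mSupport_multOfRoots]
  congr 1
  have hfiber : ∀ e ∈ P.rootedEdges (P.multOfRoots F R) v, P.multOfRoots F R e - 1 =
      ({r | P.rootEdge F R r = some e} : Finset P.Vred).card := fun e he => by
    have := (mem_rootedEdges.1 he).1
    unfold multOfRoots at this ⊢
    split_ifs at this ⊢ <;> omega
  rw [Finset.sum_congr rfl hfiber, ← Finset.card_biUnion]
  · congr 1
    ext r
    simp only [Finset.mem_biUnion, Finset.mem_filter, Finset.mem_univ, true_and,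
      mem_rootedEdges, mSupport_multOfRoots, Option.isSome_iff_exists]
    constructor
    · rintro ⟨e, ⟨-, htouch⟩, hre⟩
      have hre' := rootEdge_eq_some_iff.1 hre
      exact ⟨⟨e, hre⟩, htouch.reachable hre'.2.2.1 hre'.2.2.mem_ends⟩
    · rintro ⟨⟨e, hre⟩, hvr⟩
      exact ⟨e, ⟨two_le_multOfRoots hre,
        touches_of_mem (rootEdge_eq_some_iff.1 hre).2.2.mem_ends hvr⟩, hre⟩
  · intro e _ f _ hef
    simp only [Function.onFun, Finset.disjoint_left, Finset.mem_filter, Finset.mem_univ,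
      true_and]
    exact fun r hre hrf => hef (Option.some_injective _ (hre.symm.trans hrf))

end Forward

section ForwardIs2ERF

variable {F : Finset P.Ered} {R : Set P.Vred} {r v : P.Vred} {e : P.Ered}

namespace IsBirootedForest

lemma eq_or_eq_of_reachable (hBR : P.IsBirootedForest F R) {r₁ r₂ r₃ : P.Vred} (h₁ : r₁ ∈ R)
    (h₂ : r₂ ∈ R) (h₃ : r₃ ∈ R) (hne : r₁ ≠ r₂) (hr₁₂ : Reachable P.endsRed F r₁ r₂)
    (hr₁₃ : Reachable P.endsRed F r₁ r₃) : r₃ = r₁ ∨ r₃ = r₂ := by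
  by_contra! h
  exact hBR.2.2.2.1 r₁ h₁ r₂ h₂ r₃ h₃ hne h.1.symm h.2.symm hr₁₂ hr₁₃

lemma target_eq (hBR : P.IsBirootedForest F R) {r' : P.Vred} (hr : r ∈ R) (hr' : r' ∈ R)
    (hne : r' ≠ r) (hreach : Reachable P.endsRed F r r') : target P.endsRed F R r = r' :=
  target_eq_of_mate <| mate_eq_some hr' hne hreach fun _ hy hry hyr =>
    (hBR.eq_or_eq_of_reachable hr hr' hy hne.symm hreach hry).resolve_left hyr

lemma side_ne (hBR : P.IsBirootedForest F R) {r₁ r₂ : P.Vred} (h₁ : r₁ ∈ R) (h₂ : r₂ ∈ R)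
    (hne : r₁ ≠ r₂) (hreach : Reachable P.endsRed F r₁ r₂) : P.side r₁ ≠ P.side r₂ :=
  (P.side_ne_iff _ _).2 (hBR.2.2.2.2.2 r₁ h₁ r₂ h₂ hne hreach)

lemma compCount_multOfRoots_le_one (hBR : P.IsBirootedForest F R)
    (hlone : ∀ r₁ ∈ R, ∀ r₂ ∈ R, Reachable P.endsRed F v r₁ → Reachable P.endsRed F v r₂ →
      r₁ = r₂) :
    P.compCount (P.multOfRoots F R) v ≤ 1 := by
  rw [compCount_multOfRoots]
  split_ifs with hb
  · suffices ({r | (P.rootEdge F R r).isSome ∧ Reachable P.endsRed F v r} :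
        Finset P.Vred) = ∅ by simp [this]
    refine Finset.filter_eq_empty_iff.2 fun r _ ⟨hsome, hvr⟩ => ?_
    obtain ⟨hr, hrb, -⟩ := (rootEdge_isSome_iff hBR.1).1 hsome
    exact hrb (hlone r hr ⊥ hBR.2.1 hvr hb)
  · have : ({r | (P.rootEdge F R r).isSome ∧ Reachable P.endsRed F v r} :
        Finset P.Vred).card ≤ 1 := Finset.card_le_one.2 fun a ha b hb => by
      simp only [Finset.mem_filter, Finset.mem_univ, true_and,
        rootEdge_isSome_iff hBR.1] at ha hb
      exact hlone a ha.1.1 b hb.1.1 ha.2 hb.2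
    omega

lemma compCount_multOfRoots_eq_two (hBR : P.IsBirootedForest F R) {r₁ r₂ : P.Vred}
    (h₁ : r₁ ∈ R) (h₂ : r₂ ∈ R) (hne : r₁ ≠ r₂) (hv₁ : Reachable P.endsRed F v r₁)
    (hv₂ : Reachable P.endsRed F v r₂) : P.compCount (P.multOfRoots F R) v = 2 := by
  have h₁₂ := hv₁.symm.trans hv₂
  have hS : ({r | (P.rootEdge F R r).isSome ∧ Reachable P.endsRed F v r} : Finset P.Vred) =
      ({r₁, r₂} : Finset P.Vred).filter (· ≠ ⊥) := by
    ext r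
    simp only [Finset.mem_filter, Finset.mem_univ, true_and, Finset.mem_insert,
      Finset.mem_singleton, rootEdge_isSome_iff hBR.1]
    constructor
    · rintro ⟨⟨hr, hrb, -⟩, hvr⟩
      exact ⟨hBR.eq_or_eq_of_reachable h₁ h₂ hr hne h₁₂ (hv₁.symm.trans hvr), hrb⟩
    · rintro ⟨rfl | rfl, hrb⟩
      · exact ⟨⟨h₁, hrb, by rw [hBR.target_eq h₁ h₂ hne.symm h₁₂]; exact hne⟩, hv₁⟩
      · exact ⟨⟨h₂, hrb, by rw [hBR.target_eq h₂ h₁ hne h₁₂.symm]; exact hne.symm⟩, hv₂⟩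
  rw [compCount_multOfRoots, hS]
  by_cases hb : Reachable P.endsRed F v ⊥
  · rcases hBR.eq_or_eq_of_reachable h₁ h₂ hBR.2.1 hne h₁₂ (hv₁.symm.trans hb) with h | h
    · subst h
      simp [Finset.filter_insert, Finset.filter_singleton, hb, hne.symm]
    · subst h
      simp [Finset.filter_insert, Finset.filter_singleton, hb, hne]
  · have hb₁ : r₁ ≠ ⊥ := by rintro rfl; exact hb hv₁
    have hb₂ : r₂ ≠ ⊥ := by rintro rfl; exact hb hv₂
    simp [Finset.filter_insert, Finset.filter_singleton, hb, hb₁, hb₂, hne]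

lemma exists_pair_of_compCount_multOfRoots_eq_two (hBR : P.IsBirootedForest F R)
    (hv : P.compCount (P.multOfRoots F R) v = 2) :
    ∃ r₁ ∈ R, ∃ r₂ ∈ R, r₁ ≠ r₂ ∧ Reachable P.endsRed F v r₁ ∧ Reachable P.endsRed F v r₂ := by
  by_contra! hne
  have := hBR.compCount_multOfRoots_le_one fun r₁ h₁ r₂ h₂ hv₁ hv₂ =>
    by_contra fun h => hne r₁ h₁ r₂ h₂ h hv₁ hv₂
  omega

lemma c3At_multOfRoots (hBR : P.IsBirootedForest F R) {r₁ r₂ : P.Vred} (h₁ : r₁ ∈ R)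
    (h₂ : r₂ ∈ R) (hne : r₁ ≠ r₂) (hv₁ : Reachable P.endsRed F v r₁)
    (hv₂ : Reachable P.endsRed F v r₂) : P.C3At (P.multOfRoots F R) v := by
  have hF := hBR.1
  have h₁₂ := hv₁.symm.trans hv₂
  rw [C3At, mSupport_multOfRoots]
  constructor
  · intro hb
    obtain ⟨x, hx, hxb, hvx⟩ : ∃ x ∈ R, x ≠ ⊥ ∧ Reachable P.endsRed F v x := by
      rcases eq_or_ne r₁ ⊥ with rfl | h
      · exact ⟨r₂, h₂, hne.symm, hv₂⟩
      · exact ⟨r₁, h₁, h, hv₁⟩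
    have hxb' : Reachable P.endsRed F x ⊥ := hvx.symm.trans hb
    obtain ⟨p, hp, hin⟩ := hxb'.symm.exists_isPath
    obtain ⟨e, hlast, he⟩ := exists_getLast_isEdgeToward hF p hp hin hxb.symm
    have hre : P.rootEdge F R x = some e :=
      rootEdge_eq_some_iff.2 ⟨hx, hxb, by rwa [hBR.target_eq hx hBR.2.1 hxb.symm hxb']⟩
    exact ⟨x, p, hp, hin, ⟨e, hlast, two_le_multOfRoots hre⟩,
      (odd_bridgeCount_iff _ p).2 (hBR.side_ne hBR.2.1 hx hxb.symm hxb'.symm)⟩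
  · intro hb
    have hb₁ : r₁ ≠ ⊥ := by rintro rfl; exact hb hv₁
    have hb₂ : r₂ ≠ ⊥ := by rintro rfl; exact hb hv₂
    obtain ⟨p, hp, hin⟩ := h₁₂.exists_isPath
    obtain ⟨e₁, hh, he₁⟩ := exists_head_isEdgeToward hF p hp hin hne
    obtain ⟨e₂, hl, he₂⟩ := exists_getLast_isEdgeToward hF p hp hin hne
    have hre₁ : P.rootEdge F R r₁ = some e₁ :=
      rootEdge_eq_some_iff.2 ⟨h₁, hb₁, by rwa [hBR.target_eq h₁ h₂ hne.symm h₁₂]⟩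
    have hre₂ : P.rootEdge F R r₂ = some e₂ :=
      rootEdge_eq_some_iff.2 ⟨h₂, hb₂, by rwa [hBR.target_eq h₂ h₁ hne h₁₂.symm]⟩
    refine ⟨r₁, r₂, p, hp, hin, hv₁, ⟨e₁, hh, two_le_multOfRoots hre₁⟩,
      ⟨e₂, hl, two_le_multOfRoots hre₂⟩, fun e he => ?_,
      (odd_bridgeCount_iff _ p).2 (hBR.side_ne h₁ h₂ hne h₁₂)⟩
    have hee₁ : e = e₁ := by simpa [he] using hh
    have hee₂ : e = e₂ := by simpa [he] using hl
    subst hee₁ hee₂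
    refine multOfRoots_eq_three hre₁ hre₂ hne fun s hs => ?_
    obtain ⟨hsR, -, hs⟩ := rootEdge_eq_some_iff.1 hs
    exact hBR.eq_or_eq_of_reachable h₁ h₂ hsR hne h₁₂ (he₁.reachable hs.mem_ends)

theorem is2ERF_multOfRoots (hBR : P.IsBirootedForest F R) : P.Is2ERF (P.multOfRoots F R) := by
  refine ⟨(mSupport_multOfRoots F R).symm ▸ hBR.1, fun v => ?_, fun u v hu hv => ?_,
    fun v hv => ?_⟩
  · by_cases hpair : ∃ r₁ ∈ R, ∃ r₂ ∈ R, r₁ ≠ r₂ ∧ Reachable P.endsRed F v r₁ ∧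
        Reachable P.endsRed F v r₂
    · obtain ⟨r₁, h₁, r₂, h₂, hne, hv₁, hv₂⟩ := hpair
      exact (hBR.compCount_multOfRoots_eq_two h₁ h₂ hne hv₁ hv₂).le
    · simp only [not_exists, not_and] at hpair
      refine (hBR.compCount_multOfRoots_le_one fun r₁ h₁ r₂ h₂ hv₁ hv₂ => ?_).trans one_le_two
      exact by_contra fun h => hpair r₁ h₁ r₂ h₂ h hv₁ hv₂
  · obtain ⟨r₁, h₁, r₂, h₂, h₁₂, hu₁, hu₂⟩ := hBR.exists_pair_of_compCount_multOfRoots_eq_two hu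
    obtain ⟨r₃, h₃, r₄, h₄, h₃₄, hv₃, hv₄⟩ := hBR.exists_pair_of_compCount_multOfRoots_eq_two hv
    rw [mSupport_multOfRoots]
    exact hu₁.trans ((hBR.2.2.2.2.1 r₁ h₁ r₂ h₂ r₃ h₃ r₄ h₄ h₁₂ h₃₄ (hu₁.symm.trans hu₂)
      (hv₃.symm.trans hv₄)).trans hv₃.symm)
  · obtain ⟨r₁, h₁, r₂, h₂, h₁₂, hv₁, hv₂⟩ := hBR.exists_pair_of_compCount_multOfRoots_eq_two hv
    exact hBR.c3At_multOfRoots h₁ h₂ h₁₂ hv₁ hv₂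

end IsBirootedForest

end ForwardIs2ERF

section Inverse

variable {F : Finset P.Ered} {R : Set P.Vred} {r v : P.Vred} {e : P.Ered}

namespace IsBirootedForest

lemma isAttachedRoot_multOfRoots (hBR : P.IsBirootedForest F R)
    (h : P.rootEdge F R r = some e) : P.IsAttachedRoot (P.multOfRoots F R) r e := by
  obtain ⟨hr, hrb, hre⟩ := rootEdge_eq_some_iff.1 h
  have hmark : ∀ t, P.IsMark (P.multOfRoots F R) e t → Reachable P.endsRed F r t →
      Reachable P.endsRed (F.erase e) (target P.endsRed F R r) t := by
    rintro t (rfl | ⟨f, hfe, hf, htf⟩) hrt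
    · rw [hBR.target_eq hr hBR.2.1 hrb.symm hrt]
      exact Reachable.refl _ _
    · obtain ⟨s, hs⟩ := exists_rootEdge_eq_some hf
      obtain ⟨hsR, -, hsf⟩ := rootEdge_eq_some_iff.1 hs
      have hsr : s ≠ r := by
        rintro rfl
        exact hfe (Option.some_injective _ (hs.symm.trans h))
      rw [hBR.target_eq hr hsR hsr (hrt.trans (Reachable.of_mem_ends hsf.1 htf hsf.mem_ends))]
      exact Reachable.of_mem_ends (Finset.mem_erase.2 ⟨hfe, hsf.1⟩) hsf.mem_ends htf
  rw [IsAttachedRoot, mSupport_multOfRoots]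
  refine ⟨two_le_multOfRoots h, hre.mem_ends, fun t ht hrt => ?_, ?_⟩
  · exact hre.not_reachable (hmark t ht (hrt.mono (Finset.erase_subset _ _))) hrt
  by_cases hb : Reachable P.endsRed F r ⊥
  · exact Or.inl ⟨⊥, Or.inl rfl, hb⟩
  cases hm : mate P.endsRed F R r with
  | none =>
    refine Or.inr (Or.inr ?_)
    rw [← target_eq_compMin hm]
    exact hre.2.2
  | some m =>
    obtain ⟨hmR, hmr, hrm⟩ := mate_spec hm
    have hmb : m ≠ ⊥ := by
      rintro rfl
      exact hb hrm
    obtain ⟨em, hem⟩ := Option.isSome_iff_exists.1 <| (rootEdge_isSome_iff hBR.1).2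
      ⟨hmR, hmb, by rw [hBR.target_eq hmR hr hmr.symm hrm.symm]; exact hmr⟩
    obtain rfl | hne := eq_or_ne em e
    · refine Or.inr (Or.inl (multOfRoots_eq_three h hem hmr.symm fun s hs => ?_))
      obtain ⟨hsR, -, hs⟩ := rootEdge_eq_some_iff.1 hs
      exact hBR.eq_or_eq_of_reachable hr hmR hsR hmr.symm hrm (hre.reachable hs.mem_ends)
    · exact Or.inl ⟨m, Or.inr ⟨em, hne, two_le_multOfRoots hem,
        (rootEdge_eq_some_iff.1 hem).2.2.mem_ends⟩, hrm⟩

/-- By counting: the roots with edge root on `e` are attached roots of `e`, and both sets have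
`multOfRoots F R e - 1` elements. -/
lemma rootEdge_eq_some_iff_isAttachedRoot (hBR : P.IsBirootedForest F R) :
    P.rootEdge F R v = some e ↔ P.IsAttachedRoot (P.multOfRoots F R) v e := by
  refine ⟨hBR.isAttachedRoot_multOfRoots, fun hv => ?_⟩
  have hsub : ({r | P.rootEdge F R r = some e} : Finset P.Vred) ⊆
      ({x | P.IsAttachedRoot (P.multOfRoots F R) x e} : Finset P.Vred) := fun r hr => by
    simpa using hBR.isAttachedRoot_multOfRoots (by simpa using hr)
  have hcard := hBR.is2ERF_multOfRoots.card_isAttachedRoot hv.mem_mSupport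
  rw [multOfRoots_of_mem (mSupport_multOfRoots F R ▸ hv.mem_mSupport)] at hcard
  have hmem : v ∈ ({x | P.IsAttachedRoot (P.multOfRoots F R) x e} : Finset P.Vred) := by
    simpa using hv
  rw [← Finset.eq_of_subset_of_card_le hsub (by omega)] at hmem
  simpa using hmem

lemma mate_eq_none_and_eq_compMin (hBR : P.IsBirootedForest F R) (hr : r ∈ R)
    (hrb : r ≠ ⊥) (hre : P.rootEdge F R r = none) :
    mate P.endsRed F R r = none ∧ r = compMin P.endsRed F r := by
  have hrt : r = target P.endsRed F R r := by
    by_contra hne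
    simpa [hre] using (rootEdge_isSome_iff hBR.1).2 ⟨hr, hrb, hne⟩
  cases hm : mate P.endsRed F R r with
  | none => exact ⟨rfl, hrt.trans (target_eq_compMin hm)⟩
  | some m => exact absurd (hrt.trans (target_eq_of_mate hm)).symm (mate_spec hm).2.1

lemma compCount_multOfRoots_eq_zero (hBR : P.IsBirootedForest F R) (hr : r ∈ R) (hrb : r ≠ ⊥)
    (hre : P.rootEdge F R r = none) : P.compCount (P.multOfRoots F R) r = 0 := by
  have hlone := mate_eq_none_iff.1 (hBR.mate_eq_none_and_eq_compMin hr hrb hre).1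
  rw [compCount_multOfRoots, if_neg fun hb => hrb (hlone ⊥ hBR.2.1 hb).symm, add_zero,
    Finset.card_eq_zero, Finset.filter_eq_empty_iff]
  rintro s - ⟨hsome, hrs⟩
  obtain rfl := hlone s ((rootEdge_isSome_iff hBR.1).1 hsome).1 hrs
  simp [hre] at hsome

lemma mem_of_compCount_multOfRoots_eq_zero (hBR : P.IsBirootedForest F R)
    (h0 : P.compCount (P.multOfRoots F R) v = 0) (hmin : v = compMin P.endsRed F v) : v ∈ R := by
  obtain ⟨r, hr, hvr⟩ := hBR.2.2.1 v
  rw [compCount_multOfRoots] at h0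
  have hrb : r ≠ ⊥ := by
    rintro rfl
    simp [hvr] at h0
  have hre : P.rootEdge F R r = none := by
    rw [← Option.not_isSome_iff_eq_none]
    intro hsome
    have hS := (Nat.add_eq_zero_iff.1 h0).1
    rw [Finset.card_eq_zero, Finset.filter_eq_empty_iff] at hS
    exact hS (Finset.mem_univ r) ⟨hsome, hvr⟩
  rw [hmin, compMin_congr hvr, ← (hBR.mate_eq_none_and_eq_compMin hr hrb hre).2]
  exact hr

theorem rootsOfMult_multOfRoots (hBR : P.IsBirootedForest F R) :
    P.rootsOfMult (P.multOfRoots F R) = R := by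
  ext v
  simp only [rootsOfMult, Set.mem_ofPred_eq, mSupport_multOfRoots,
    ← hBR.rootEdge_eq_some_iff_isAttachedRoot]
  refine ⟨?_, fun hv => ?_⟩
  · rintro (rfl | ⟨h0, hmin⟩ | ⟨e, he⟩)
    exacts [hBR.2.1, hBR.mem_of_compCount_multOfRoots_eq_zero h0 hmin,
      (rootEdge_eq_some_iff.1 he).1]
  by_cases hvb : v = ⊥
  · exact Or.inl hvb
  cases hre : P.rootEdge F R v with
  | some e => exact Or.inr (Or.inr ⟨e, rfl⟩)
  | none => exact Or.inr (Or.inl ⟨hBR.compCount_multOfRoots_eq_zero hv hvb hre,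
      (hBR.mate_eq_none_and_eq_compMin hv hvb hre).2⟩)

end IsBirootedForest

namespace Is2ERF

variable {mult : P.Ered → ℕ} {x : P.Vred}

lemma isEdgeToward_of_mem_rootsOfMult (h : P.Is2ERF mult) (hx : P.IsAttachedRoot mult x e)
    (hm : v ∈ P.rootsOfMult mult) (hne : v ≠ x)
    (hxv : Reachable P.endsRed (P.mSupport mult) x v) :
    IsEdgeToward P.endsRed (P.mSupport mult) x v e := by
  rcases hm with rfl | ⟨h0, -⟩ | ⟨f, hv⟩
  · exact hx.isEdgeToward (Or.inl rfl)
  · have hS := sum_le_compCount (Finset.singleton_subset_iff.2 (hx.mem_rootedEdges hxv.symm))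
    have := hx.1
    simp only [Finset.sum_singleton, h0] at hS
    omega
  · obtain rfl | hfe := eq_or_ne f e
    · exact .of_ends h.1 hx.mem_mSupport ((Sym2.mem_and_mem_iff hne.symm).1 ⟨hx.2.1, hv.2.1⟩)
    · exact hx.isEdgeToward (Or.inr ⟨f, hfe, hv.1, hv.2.1⟩)

lemma not_reachable_compMin (h : P.Is2ERF mult) (hx : P.IsAttachedRoot mult x e)
    (hlone : ∀ y ∈ P.rootsOfMult mult, Reachable P.endsRed (P.mSupport mult) x y → y = x) :
    ¬ Reachable P.endsRed ((P.mSupport mult).erase e) x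
      (compMin P.endsRed (P.mSupport mult) x) := by
  rcases hx.2.2.2 with ⟨t, (rfl | ⟨f, hfe, hf, htf⟩), hxt⟩ | h3 | hmin
  · exact absurd (hlone ⊥ (Or.inl rfl) hxt) hx.ne_bot.symm
  · obtain ⟨y, hy⟩ := h.exists_isAttachedRoot hf
    have hyf := Reachable.of_mem_ends hy.mem_mSupport htf hy.2.1
    exact absurd (hlone y hy.mem_rootsOfMult (hxt.trans hyf) ▸ hy |>.edge_unique hx) hfe
  · obtain ⟨y, hxy⟩ := Sym2.mem_iff_exists.1 hx.2.1
    have hne : x ≠ y := fun hc => h.1 e hx.mem_mSupport x y hxy (hc ▸ Reachable.refl _ _)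
    exact absurd (hlone y (h.isAttachedRoot_of_mult_eq_three h3 (by simp [hxy])).mem_rootsOfMult
      (.of_edge hx.mem_mSupport hxy)) hne.symm
  · exact hmin

lemma rootEdge_rootsOfMult_of_isAttachedRoot (h : P.Is2ERF mult)
    (hx : P.IsAttachedRoot mult x e) :
    P.rootEdge (P.mSupport mult) (P.rootsOfMult mult) x = some e := by
  refine rootEdge_eq_some_iff.2 ⟨hx.mem_rootsOfMult, hx.ne_bot, ?_⟩
  cases hm : mate P.endsRed (P.mSupport mult) (P.rootsOfMult mult) x with
  | none =>
    rw [target_eq_compMin hm]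
    exact ⟨hx.mem_mSupport, hx.2.1, h.not_reachable_compMin hx (mate_eq_none_iff.1 hm)⟩
  | some m =>
    obtain ⟨hmR, hmx, hxm⟩ := mate_spec hm
    rw [target_eq_of_mate hm]
    exact h.isEdgeToward_of_mem_rootsOfMult hx hmR hmx hxm

lemma rootEdge_rootsOfMult_eq_some_iff (h : P.Is2ERF mult) :
    P.rootEdge (P.mSupport mult) (P.rootsOfMult mult) x = some e ↔
      P.IsAttachedRoot mult x e := by
  refine ⟨fun hx => ?_, h.rootEdge_rootsOfMult_of_isAttachedRoot⟩
  obtain ⟨hxR, hxb, hxe⟩ := rootEdge_eq_some_iff.1 hx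
  rcases hxR with rfl | ⟨h0, hmin⟩ | ⟨e', hx'⟩
  · exact absurd rfl hxb
  · have hlone : ∀ y ∈ P.rootsOfMult mult, Reachable P.endsRed (P.mSupport mult) x y → y = x :=
      fun y hy hxy => Finset.card_le_one.1 (by simpa [h0] using h.card_rootsOfMult_reachable_le x)
        y (by simpa using ⟨hy, hxy⟩) x
        (by simpa using ⟨Or.inr (Or.inl ⟨h0, hmin⟩), Reachable.refl _ x⟩)
    rw [target_eq_compMin (mate_eq_none_iff.2 hlone), ← hmin] at hxe
    exact absurd rfl hxe.ne
  · rw [h.rootEdge_rootsOfMult_of_isAttachedRoot hx', Option.some_inj] at hx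
    exact hx ▸ hx'

theorem multOfRoots_rootsOfMult (h : P.Is2ERF mult) :
    P.multOfRoots (P.mSupport mult) (P.rootsOfMult mult) = mult := by
  funext e
  by_cases he : e ∈ P.mSupport mult
  · have hfiber : ({x | P.rootEdge (P.mSupport mult) (P.rootsOfMult mult) x = some e} :
        Finset P.Vred) = ({x | P.IsAttachedRoot mult x e} : Finset P.Vred) := by
      simp only [h.rootEdge_rootsOfMult_eq_some_iff]
    rw [multOfRoots_of_mem he, hfiber, h.card_isAttachedRoot he]
    have := mem_mSupport.1 he
    omega
  · rw [multOfRoots, if_neg he]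
    exact (not_not.1 (mt mem_mSupport.2 he)).symm

end Is2ERF

end Inverse

end BiconedGraph

/-- Lemma 3.6.  For any biconed graph `G^{A,B}` there is a
bijection between the set of birooted forests of `G^{A,B}_red` and the set of
2-edge-rooted forests of `G^{A,B}_red`. -/
theorem birootedForests_equiv_twoEdgeRootedForests (P : BiconedGraph) :
    Nonempty ({FR : Finset P.Ered × Set P.Vred // P.IsBirootedForest FR.1 FR.2} ≃
      {mult : P.Ered → ℕ // P.Is2ERF mult}) :=
  ⟨{ toFun := fun FR => ⟨P.multOfRoots FR.1.1 FR.1.2, FR.2.is2ERF_multOfRoots⟩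
     invFun := fun m => ⟨(P.mSupport m.1, P.rootsOfMult m.1), m.2.isBirootedForest_rootsOfMult⟩
     left_inv := fun ⟨⟨F, R⟩, hBR⟩ =>
       Subtype.ext (Prod.ext (P.mSupport_multOfRoots F R) hBR.rootsOfMult_multOfRoots)
     right_inv := fun ⟨_, h⟩ => Subtype.ext h.multOfRoots_rootsOfMult }⟩

end

end BiconedPaper
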